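/- arXiv:1810.06226 — 8 statements merged into one kernel-verified Lean document; each statement's English description precedes it below -/
import Mathlib

section
/- Let p be a continuously differentiable, positive probability density on ℝ with distribution function P. For fixed t ∈ ℝ, define f_t(x) = (1/p(x)) ∫_{-∞}^x (1_{(-∞,t]}(s) − P(t)) p(s) ds. Then f_t is differentiable on ℝ \ {t} with f_t'(x) = −(p'(x)/p(x)) f_t(x) + 1_{(-∞,t]}(x) − P(t) for all x ≠ t. -/
/-! Writing `f_t = g / p` with `g x = ∫_{-∞}^x h`, the integrand `h = (1_{(-∞,t]} - P t) p` is
integrable and continuous away from `t`, so the fundamental theorem of calculus gives `g' = h`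
off `t`, and the quotient rule turns this into the stated formula. -/

open MeasureTheory Filter Set

theorem hasDerivAt_integral_Iic {E : Type*} [NormedAddCommGroup E] [NormedSpace ℝ E]
    [CompleteSpace E] {h : ℝ → E} {x : ℝ} (hh : Integrable h) (hx : ContinuousAt h x) :
    HasDerivAt (fun y => ∫ s in Iic y, h s) (h x) x := by
  have hsplit : ∀ y, ∫ s in Iic y, h s = (∫ s in Iic x, h s) + ∫ s in x..y, h s := fun y =>
    eq_add_of_sub_eq' (intervalIntegral.integral_Iic_sub_Iic hh.integrableOn hh.integrableOn)
  exact ((intervalIntegral.integral_hasDerivAt_right hh.intervalIntegrable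
    hh.aestronglyMeasurable.stronglyMeasurableAtFilter hx).const_add _).congr_of_eventuallyEq
    (Eventually.of_forall hsplit)

theorem continuousAt_indicator_Iic_one {t x : ℝ} (hx : x ≠ t) :
    ContinuousAt (indicator (Iic t) fun _ => (1 : ℝ)) x :=
  continuousOn_const.continuousAt_indicator (by simpa [frontier_Iic] using hx)

theorem MeasureTheory.Integrable.indicator_Iic_one_sub_const_mul {p : ℝ → ℝ} (hp : Integrable p)
    (t c : ℝ) :
    Integrable fun s => (Set.indicator (Iic t) (fun _ => (1 : ℝ)) s - c) * p s := by
  refine hp.bdd_mul (c := 1 + ‖c‖)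
    ((measurable_const.indicator measurableSet_Iic).sub_const c).aestronglyMeasurable
    (Eventually.of_forall fun s => (norm_sub_le _ _).trans ?_)
  gcongr
  by_cases hs : s ∈ Iic t <;> simp [hs]

theorem stein_solution_derivative_general
    (p : ℝ → ℝ) (hp_pos : ∀ x, 0 < p x) (hp_smooth : ContDiff ℝ 1 p)
    (hp_int : ∫ x, p x = 1)
    (P : ℝ → ℝ)
    (t : ℝ) (f : ℝ → ℝ)
    (hf : ∀ x, f x = (1 / p x) *
      ∫ s in Iic x, (Set.indicator (Iic t) (fun _ => (1 : ℝ)) s - P t) * p s) :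
    ∀ x ≠ t, HasDerivAt f
      (-(deriv p x / p x) * f x + Set.indicator (Iic t) (fun _ => (1 : ℝ)) x - P t) x := by
  intro x hx
  have hp_integrable : Integrable p := Integrable.of_integral_ne_zero (by simp [hp_int])
  have hnum := hasDerivAt_integral_Iic (hp_integrable.indicator_Iic_one_sub_const_mul t (P t))
    (((continuousAt_indicator_Iic_one hx).sub continuousAt_const).mul
      hp_smooth.continuous.continuousAt)
  have hden : HasDerivAt p (deriv p x) x := (hp_smooth.differentiable one_ne_zero x).hasDerivAt
  have hpx : p x ≠ 0 := (hp_pos x).ne'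
  have hquot : ∀ y, f y =
      (∫ s in Iic y, (indicator (Iic t) (fun _ => (1 : ℝ)) s - P t) * p s) / p y := fun y => by
    rw [hf y, one_div_mul_eq_div]
  refine ((hnum.div hden hpx).congr_deriv ?_).congr_of_eventuallyEq (Eventually.of_forall hquot)
  rw [hquot x]
  field_simp
  ring

theorem stein_solution_derivative
    (p : ℝ → ℝ) (hp_pos : ∀ x, 0 < p x) (hp_smooth : ContDiff ℝ 1 p)
    (hp_int : ∫ x, p x = 1)
    (P : ℝ → ℝ) (hP : ∀ x, P x = ∫ s in Iic x, p s)
    (t : ℝ) (f : ℝ → ℝ)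
    (hf : ∀ x, f x = (1 / p x) *
      ∫ s in Iic x, (Set.indicator (Iic t) (fun _ => (1 : ℝ)) s - P t) * p s) :
    ∀ x ≠ t, HasDerivAt f
      (-(deriv p x / p x) * f x + Set.indicator (Iic t) (fun _ => (1 : ℝ)) x - P t) x :=
  stein_solution_derivative_general p hp_pos hp_smooth hp_int P t f hf
end

section
/- Let p be a continuously differentiable positive probability density on ℝ with distribution function P satisfying sup_x |p'(x)·min{P(x), 1−P(x)}/p(x)²| = κ < ∞. Then for every t ∈ ℝ, the function f_t(x) = (1/p(x)) ∫_{-∞}^x (1_{(-∞,t]}(s) − P(t)) p(s) ds satisfies sup_{x ≠ t} |(p'(x)/p(x)) f_t(x)| ≤ 2κ and sup_{x ≠ t} |f_t'(x)| ≤ 2κ + 2. -/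
open MeasureTheory Set

/-!
With `F t x = ∫_{-∞}^x (1_{s ≤ t} - P t) p s ds = P (min x t) - P t * P x`, the Stein solution is
`f = F t / p`, and `0 ≤ F t x ≤ min (P x) (1 - P x)` because `P` is monotone with values in
`[0, 1]`. Hence `(p' / p) f = p' F / p²` is bounded by `κ`. Away from `t` the integrand is
continuous, so the fundamental theorem of calculus gives
`f' = (1_{x ≤ t} - P t) - p' F / p²`, a jump of size at most `1` plus a term bounded by `κ`.
-/

theorem hasDerivAt_setIntegral_Iic {E : Type*} [NormedAddCommGroup E] [NormedSpace ℝ E]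
    [CompleteSpace E] {g : ℝ → E} (hg : Integrable g) {x : ℝ} (hgx : ContinuousAt g x) :
    HasDerivAt (fun u => ∫ s in Iic u, g s) (g x) x := by
  have hsplit :
      (fun u => ∫ s in Iic u, g s) = fun u => (∫ s in Iic 0, g s) + ∫ s in 0..u, g s := by
    funext u
    rw [← intervalIntegral.integral_Iic_sub_Iic hg.integrableOn hg.integrableOn, add_sub_cancel]
  rw [hsplit]
  exact (intervalIntegral.integral_hasDerivAt_right hg.intervalIntegrable
    hg.aestronglyMeasurable.stronglyMeasurableAtFilter hgx).const_add _

theorem hasDerivAt_setIntegral_Iic_div {g p : ℝ → ℝ} {x : ℝ} (hg : Integrable g)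
    (hgx : ContinuousAt g x) (hp : DifferentiableAt ℝ p x) (hpx : p x ≠ 0) :
    HasDerivAt (fun u => (∫ s in Iic u, g s) / p u)
      (g x / p x - deriv p x * (∫ s in Iic x, g s) / p x ^ 2) x := by
  refine ((hasDerivAt_setIntegral_Iic hg hgx).div hp.hasDerivAt hpx).congr_deriv ?_
  field_simp

section SetIntegralIic

variable {p : ℝ → ℝ}

theorem monotone_setIntegral_Iic (hp : Integrable p) (hp_nonneg : 0 ≤ p) :
    Monotone fun x => ∫ s in Iic x, p s := fun _ _ hab =>
  setIntegral_mono_set hp.integrableOn (ae_of_all _ hp_nonneg) (Iic_subset_Iic.2 hab).eventuallyLE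

theorem setIntegral_Iic_mem_Icc (hp : Integrable p) (hp_nonneg : 0 ≤ p) (hp_int : ∫ x, p x = 1)
    (x : ℝ) : ∫ s in Iic x, p s ∈ Icc 0 1 :=
  ⟨setIntegral_nonneg measurableSet_Iic fun s _ => hp_nonneg s,
    hp_int ▸ setIntegral_le_integral hp (ae_of_all _ hp_nonneg)⟩

theorem indicator_one_sub_mul (s : Set ℝ) (c x : ℝ) :
    (s.indicator (fun _ => (1 : ℝ)) x - c) * p x = s.indicator p x - c * p x := by
  by_cases hx : x ∈ s <;> simp [hx, sub_mul]

theorem MeasureTheory.Integrable.indicator_one_sub_mul (hp : Integrable p) {s : Set ℝ}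
    (hs : MeasurableSet s) (c : ℝ) :
    Integrable fun x => (s.indicator (fun _ => (1 : ℝ)) x - c) * p x := by
  simp only [_root_.indicator_one_sub_mul]
  exact (hp.indicator hs).sub (hp.const_mul c)

theorem continuousAt_indicator_Iic_one_sub_mul {t x : ℝ} (hpx : ContinuousAt p x) (hx : x ≠ t)
    (c : ℝ) : ContinuousAt (fun s => ((Iic t).indicator (fun _ => (1 : ℝ)) s - c) * p s) x :=
  ((continuousOn_const.continuousAt_indicator (by simp [hx])).sub continuousAt_const).mul hpx

theorem setIntegral_Iic_indicator_one_sub_mul (hp : Integrable p) (t c x : ℝ) :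
    ∫ s in Iic x, ((Iic t).indicator (fun _ => (1 : ℝ)) s - c) * p s
      = (∫ s in Iic (min x t), p s) - c * ∫ s in Iic x, p s := by
  simp only [indicator_one_sub_mul]
  rw [integral_sub (hp.indicator measurableSet_Iic).integrableOn (hp.const_mul c).integrableOn,
    setIntegral_indicator measurableSet_Iic, Iic_inter_Iic, integral_const_mul]

end SetIntegralIic

theorem sub_mul_mem_Icc_min_of_monotone {P : ℝ → ℝ} (hP : Monotone P)
    (hP01 : ∀ x, P x ∈ Icc 0 1) (x t : ℝ) :
    P (min x t) - P t * P x ∈ Icc 0 (min (P x) (1 - P x)) := by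
  obtain ⟨hx0, hx1⟩ := hP01 x
  obtain ⟨ht0, ht1⟩ := hP01 t
  rcases le_total x t with h | h
  · have := hP h
    rw [min_eq_left h]
    exact ⟨by nlinarith, le_min (by nlinarith) (by nlinarith)⟩
  · have := hP h
    rw [min_eq_right h]
    exact ⟨by nlinarith, le_min (by nlinarith) (by nlinarith)⟩

theorem abs_indicator_one_sub_le (s : Set ℝ) {c : ℝ} (hc : c ∈ Icc 0 1) (x : ℝ) :
    |s.indicator (fun _ => (1 : ℝ)) x - c| ≤ 1 := by
  obtain ⟨hc0, hc1⟩ := hc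
  by_cases hx : x ∈ s <;> simp [hx, abs_le] <;> constructor <;> linarith

theorem abs_mul_div_le_abs_mul_div {a b c d : ℝ} (hb : 0 ≤ b) (hbc : b ≤ c) :
    |a * b / d| ≤ |a * c / d| := by
  simp only [abs_div, abs_mul]
  gcongr

theorem stein_solution_bounds
    (p : ℝ → ℝ) (hp_pos : ∀ x, 0 < p x) (hp_smooth : ContDiff ℝ 1 p)
    (hp_int : ∫ x, p x = 1)
    (P : ℝ → ℝ) (hP : ∀ x, P x = ∫ s in Iic x, p s)
    (κ : ℝ)
    (hκ : IsLUB {y | ∃ x, y = |deriv p x * min (P x) (1 - P x) / (p x) ^ 2|} κ)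
    (t : ℝ) (f : ℝ → ℝ)
    (hf : ∀ x, f x = (1 / p x) *
      ∫ s in Iic x, (Set.indicator (Iic t) (fun _ => (1 : ℝ)) s - P t) * p s) :
    (∀ x ≠ t, |deriv p x / p x * f x| ≤ 2 * κ) ∧
      (∀ x ≠ t, |deriv f x| ≤ 2 * κ + 2) := by
  have hp_intg : Integrable p := Integrable.of_integral_ne_zero (by simp [hp_int])
  have hp_nonneg : 0 ≤ p := fun x => (hp_pos x).le
  have hP_eq : P = fun x => ∫ s in Iic x, p s := funext hP
  have hP01 : ∀ x, P x ∈ Icc 0 1 := hP_eq ▸ setIntegral_Iic_mem_Icc hp_intg hp_nonneg hp_int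
  have hP_mono : Monotone P := hP_eq ▸ monotone_setIntegral_Iic hp_intg hp_nonneg
  have hF (x : ℝ) : ∫ s in Iic x, ((Iic t).indicator (fun _ => (1 : ℝ)) s - P t) * p s
      = P (min x t) - P t * P x := by
    rw [setIntegral_Iic_indicator_one_sub_mul hp_intg, ← hP, ← hP]
  have hF_le (x : ℝ) : |deriv p x * (P (min x t) - P t * P x) / p x ^ 2| ≤ κ :=
    have hFx := sub_mul_mem_Icc_min_of_monotone hP_mono hP01 x t
    (abs_mul_div_le_abs_mul_div hFx.1 hFx.2).trans (hκ.1 ⟨x, rfl⟩)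
  have hκ0 : 0 ≤ κ := (abs_nonneg _).trans (hκ.1 ⟨t, rfl⟩)
  refine ⟨fun x _ => ?_, fun x hx => ?_⟩
  · have hfx : deriv p x / p x * f x = deriv p x * (P (min x t) - P t * P x) / p x ^ 2 := by
      rw [hf, hF]
      field_simp
    linarith [hfx ▸ hF_le x]
  · have hf' :
        f = fun u => (∫ s in Iic u, ((Iic t).indicator (fun _ => (1 : ℝ)) s - P t) * p s) / p u :=
      funext fun u => by rw [hf, one_div, inv_mul_eq_div]
    have hderiv := hasDerivAt_setIntegral_Iic_div
      (hp_intg.indicator_one_sub_mul measurableSet_Iic (P t))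
      (continuousAt_indicator_Iic_one_sub_mul hp_smooth.continuous.continuousAt hx (P t))
      ((hp_smooth.differentiable one_ne_zero) x) (hp_pos x).ne'
    rw [hf', hderiv.deriv, hF, mul_div_cancel_right₀ _ (hp_pos x).ne']
    calc _ ≤ _ := abs_sub _ _
      _ ≤ 1 + κ := add_le_add (abs_indicator_one_sub_le _ (hP01 t) x) (hF_le x)
      _ ≤ 2 * κ + 2 := by linarith
end

section
/- Let p be a continuously differentiable positive probability density on ℝ satisfying ∫(1+|x|)|p'(x)|dx < ∞. If X is a random variable with density p, then for every t ∈ ℝ, P(t) = E[(p'(X)/p(X))·(t − X)·1{X ≤ t}], where P is the cumulative distribution function of p. -/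
/-!
Pushing the expectation forward to the density turns the right-hand side into
`∫_{x ≤ t} p'(x) (t - x) dx`. Integrating by parts against `x ↦ t - x` gives `∫_{x ≤ t} p`,
once the boundary term `p(x) (t - x)` vanishes at `-∞`. It does: `p → 0` there because `p`
and `p'` are integrable, and for `b ≤ 0`, `|b p(b)| = |b| |∫_{x ≤ b} p'| ≤ ∫_{x ≤ b} (1 + |x|) |p'|`,
a tail of an integrable function.
-/

open MeasureTheory Real Filter Set Topology

section WeightedIntegrability

variable {g : ℝ → ℝ}

lemma abs_sub_le_one_add_abs_mul_one_add_abs (c x : ℝ) : |c - x| ≤ (1 + |c|) * (1 + |x|) := by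
  nlinarith [abs_sub c x, abs_nonneg c, abs_nonneg x, mul_nonneg (abs_nonneg c) (abs_nonneg x)]

lemma MeasureTheory.Integrable.of_one_add_abs_mul (hg : AEStronglyMeasurable g)
    (hw : Integrable fun x => (1 + |x|) * |g x|) : Integrable g :=
  hw.mono hg <| ae_of_all _ fun x => by
    simp only [Real.norm_eq_abs, abs_mul, abs_abs, abs_of_nonneg (by positivity : 0 ≤ 1 + |x|)]
    nlinarith [abs_nonneg x, abs_nonneg (g x)]

lemma MeasureTheory.Integrable.mul_const_sub_of_one_add_abs_mul (hg : AEStronglyMeasurable g)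
    (hw : Integrable fun x => (1 + |x|) * |g x|) (c : ℝ) :
    Integrable fun x => g x * (c - x) :=
  (hw.const_mul (1 + |c|)).mono (hg.mul (by fun_prop)) <| ae_of_all _ fun x => by
    simp only [Real.norm_eq_abs, abs_mul, abs_abs, abs_of_nonneg (by positivity : 0 ≤ 1 + |x|),
      abs_of_nonneg (by positivity : 0 ≤ 1 + |c|)]
    calc |g x| * |c - x| ≤ |g x| * ((1 + |c|) * (1 + |x|)) := by
          gcongr; exact abs_sub_le_one_add_abs_mul_one_add_abs c x
      _ = (1 + |c|) * ((1 + |x|) * |g x|) := by ring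

end WeightedIntegrability

section IntegrableDerivative

variable {f : ℝ → ℝ}

lemma integral_Iic_deriv_eq_of_integrable (hf : Differentiable ℝ f) (hfi : Integrable f)
    (hf'i : Integrable (deriv f)) (b : ℝ) : ∫ x in Iic b, deriv f x = f b := by
  have hlim : Tendsto f atBot (𝓝 0) :=
    tendsto_zero_of_hasDerivAt_of_integrableOn_Iic (a := 0) (fun x _ => (hf x).hasDerivAt)
      hf'i.integrableOn hfi.integrableOn
  rw [integral_Iic_of_hasDerivAt_of_tendsto' (fun x _ => (hf x).hasDerivAt) hf'i.integrableOn hlim,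
    sub_zero]

lemma tendsto_mul_self_atBot_of_integrable_one_add_abs_mul_deriv (hf : Differentiable ℝ f)
    (hfi : Integrable f) (hw : Integrable fun x => (1 + |x|) * |deriv f x|) :
    Tendsto (fun b => b * f b) atBot (𝓝 0) := by
  have hf'i : Integrable (deriv f) :=
    hw.of_one_add_abs_mul (measurable_deriv f).aestronglyMeasurable
  refine squeeze_zero_norm' (a := fun b => ∫ x in Iic b, (1 + |x|) * |deriv f x|) ?_
    (tendsto_integral_Iic_zero tendsto_id)
  filter_upwards [Iic_mem_atBot (0 : ℝ)] with b (hb : b ≤ 0)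
  calc ‖b * f b‖ = |b| * ‖∫ x in Iic b, deriv f x‖ := by
        rw [integral_Iic_deriv_eq_of_integrable hf hfi hf'i, norm_mul, Real.norm_eq_abs]
    _ ≤ |b| * ∫ x in Iic b, |deriv f x| := by
        gcongr; exact norm_integral_le_integral_norm _
    _ = ∫ x in Iic b, |b| * |deriv f x| := (integral_const_mul _ _).symm
    _ ≤ ∫ x in Iic b, (1 + |x|) * |deriv f x| := by
        refine setIntegral_mono_on (hf'i.abs.const_mul _).integrableOn hw.integrableOn
          measurableSet_Iic fun x (hx : x ≤ b) => ?_
        have : |b| ≤ 1 + |x| := by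
          rw [abs_of_nonpos hb, abs_of_nonpos (hx.trans hb)]; linarith
        gcongr

lemma integral_Iic_deriv_mul_sub_eq_integral_Iic (hf : Differentiable ℝ f) (hfi : Integrable f)
    (hw : Integrable fun x => (1 + |x|) * |deriv f x|) (t : ℝ) :
    ∫ x in Iic t, deriv f x * (t - x) = ∫ x in Iic t, f x := by
  have hf'i : Integrable (deriv f) :=
    hw.of_one_add_abs_mul (measurable_deriv f).aestronglyMeasurable
  have hlim : Tendsto f atBot (𝓝 0) :=
    tendsto_zero_of_hasDerivAt_of_integrableOn_Iic (a := 0) (fun x _ => (hf x).hasDerivAt)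
      hf'i.integrableOn hfi.integrableOn
  have hboundary : Tendsto (fun x => f x * (t - x)) atBot (𝓝 0) := by
    simpa [mul_sub, mul_comm] using
      (hlim.mul_const t).sub (tendsto_mul_self_atBot_of_integrable_one_add_abs_mul_deriv hf hfi hw)
  have hvanish : Tendsto (fun x => f x * (t - x)) (𝓝[<] t) (𝓝 0) := by
    have : Continuous fun x => f x * (t - x) := by have := hf.continuous; fun_prop
    simpa using (this.tendsto t).mono_left nhdsWithin_le_nhds
  have hparts := integral_Iic_mul_deriv_eq_deriv_mul (a := t) (u := f) (v := fun x => t - x)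
    (v' := fun _ => (-1 : ℝ)) (fun x _ => (hf x).hasDerivAt)
    (fun x _ => by simpa using (hasDerivAt_id x).const_sub t)
    (by simpa [Pi.mul_def] using hfi.neg.integrableOn)
    (hw.mul_const_sub_of_one_add_abs_mul (measurable_deriv f).aestronglyMeasurable t).integrableOn
    hvanish hboundary
  simp only [mul_neg, mul_one, integral_neg, zero_sub, sub_zero] at hparts
  linarith

end IntegrableDerivative

lemma integral_comp_eq_integral_mul_of_map_eq_withDensity {Ω E : Type*} [MeasurableSpace Ω]
    [MeasurableSpace E] {ℙ : Measure Ω} {μ : Measure E} {X : Ω → E} (hX : AEMeasurable X ℙ)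
    {p : E → ℝ} (hp : Measurable p) (hp_nonneg : ∀ x, 0 ≤ p x)
    (hlaw : ℙ.map X = μ.withDensity fun x => ENNReal.ofReal (p x)) {g : E → ℝ}
    (hg : Measurable g) :
    ∫ ω, g (X ω) ∂ℙ = ∫ x, p x * g x ∂μ := by
  rw [← integral_map hX hg.aestronglyMeasurable, hlaw,
    integral_withDensity_eq_integral_toReal_smul hp.ennreal_ofReal
      (ae_of_all _ fun _ => ENNReal.ofReal_lt_top)]
  simp [ENNReal.toReal_ofReal (hp_nonneg _)]

theorem cdf_representation_real_line_general
    {Ω : Type*} [MeasurableSpace Ω] (ℙ : Measure Ω)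
    (X : Ω → ℝ) (hX : Measurable X)
    (p : ℝ → ℝ) (hp_pos : ∀ x, 0 < p x) (hp_smooth : ContDiff ℝ 1 p)
    (hp_int : ∫ x, p x = 1)
    (hC3 : Integrable (fun x => (1 + |x|) * |deriv p x|))
    (hlaw : Measure.map X ℙ = volume.withDensity fun x => ENNReal.ofReal (p x)) :
    ∀ t, (∫ x in Iic t, p x) =
      ∫ ω, deriv p (X ω) / p (X ω) * (t - X ω) *
        Set.indicator (Iic t) (fun _ => (1 : ℝ)) (X ω) ∂ℙ := by
  intro t
  have hdiff : Differentiable ℝ p := hp_smooth.differentiable one_ne_zero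
  have hpi : Integrable p := .of_integral_ne_zero (by simp [hp_int])
  set g : ℝ → ℝ := fun x => deriv p x / p x * (t - x) * (Iic t).indicator (fun _ => 1) x
  have hg : Measurable g :=
    (((measurable_deriv p).div hdiff.continuous.measurable).mul (by fun_prop)).mul
      (measurable_const.indicator measurableSet_Iic)
  have hpg : (fun x => p x * g x) = (Iic t).indicator fun x => deriv p x * (t - x) := by
    ext x
    by_cases hx : x ∈ Iic t
    · simp only [g, indicator_of_mem hx]
      field_simp [(hp_pos x).ne']
    · simp [g, hx]
  rw [integral_comp_eq_integral_mul_of_map_eq_withDensity hX.aemeasurable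
      hdiff.continuous.measurable (fun x => (hp_pos x).le) hlaw hg,
    hpg, integral_indicator measurableSet_Iic,
    integral_Iic_deriv_mul_sub_eq_integral_Iic hdiff hpi hC3 t]

theorem cdf_representation_real_line
    {Ω : Type*} [MeasurableSpace Ω] (ℙ : Measure Ω) [IsProbabilityMeasure ℙ]
    (X : Ω → ℝ) (hX : Measurable X)
    (p : ℝ → ℝ) (hp_pos : ∀ x, 0 < p x) (hp_smooth : ContDiff ℝ 1 p)
    (hp_int : ∫ x, p x = 1)
    (hC3 : Integrable (fun x => (1 + |x|) * |deriv p x|))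
    (hlaw : Measure.map X ℙ = volume.withDensity fun x => ENNReal.ofReal (p x)) :
    ∀ t, (∫ x in Iic t, p x) =
      ∫ ω, deriv p (X ω) / p (X ω) * (t - X ω) *
        Set.indicator (Iic t) (fun _ => (1 : ℝ)) (X ω) ∂ℙ :=
  cdf_representation_real_line_general ℙ X hX p hp_pos hp_smooth hp_int hC3 hlaw
end

section
/- Let μ ∈ ℝ, σ > 0, and let X be a real random variable with E|X| < ∞ and ℙ(X = μ) = 0. Then X has the Laplace distribution with density p(x) = (1/(2σ))exp(−|x−μ|/σ) if and only if F_X(t) = E[(sign(μ − X)/σ)·(t − X)·1{X ≤ t}] for all t ∈ ℝ. -/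
/-!
Write `ν` for the law of `X`, `F` for its cdf and `H s = ∫_{x < s} sign (μ - x) dν`. Since
`(t - x)⁺ = ∫ 1{x < s ≤ t} ds`, Fubini turns the right-hand side of the fixed-point equation into
`σ⁻¹ ∫_{s ≤ t} H s ds`, a continuous function of `t`. So a solution `F` is continuous, `ν` has no
atoms, and then `H s = 2 F (min s μ) - F s`: the equation becomes the linear ODE `σ F' = F` on
`(-∞, μ]` and `σ F' = 2 F μ - F` on `[μ, ∞)`, solved by `F μ e^{(t - μ)/σ}` and
`2 F μ - F μ e^{-(t - μ)/σ}`. Letting `t → ∞` forces `F μ = 1/2`, and `F` is the Laplace cdf.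
Conversely, for the Laplace law `H = σ p`, so the right-hand side is `∫_{s ≤ t} p = F t`.
-/

open MeasureTheory Real Filter Set Topology
-- Not the whole namespace: its scoped notation `ℙ` would capture the binder `ℙ` of the theorem.
open ProbabilityTheory (cdf cdf_eq_real ofReal_cdf measure_cdf tendsto_cdf_atTop)

noncomputable def laplacePDF (μ σ x : ℝ) : ℝ := 1 / (2 * σ) * exp (-|x - μ| / σ)

noncomputable def laplaceCDF (μ σ t : ℝ) : ℝ :=
  if t ≤ μ then exp ((t - μ) / σ) / 2 else 1 - exp (-(t - μ) / σ) / 2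

noncomputable def laplaceMeasure (μ σ : ℝ) : Measure ℝ :=
  volume.withDensity fun x => ENNReal.ofReal (laplacePDF μ σ x)

section Laplace

variable {μ σ : ℝ}

instance : NullSingletonClass (laplaceMeasure μ σ) := by
  unfold laplaceMeasure; infer_instance

lemma laplacePDF_nonneg (hσ : 0 ≤ σ) (x : ℝ) : 0 ≤ laplacePDF μ σ x := by
  unfold laplacePDF; positivity

lemma continuous_laplacePDF : Continuous (laplacePDF μ σ) := by
  unfold laplacePDF; fun_prop

lemma laplacePDF_of_le {x : ℝ} (hx : x ≤ μ) :
    laplacePDF μ σ x = exp (-(μ / σ)) / (2 * σ) * exp (σ⁻¹ * x) := by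
  rw [laplacePDF, abs_of_nonpos (sub_nonpos.2 hx),
    show - -(x - μ) / σ = -(μ / σ) + σ⁻¹ * x by ring, exp_add]
  ring

lemma integrableOn_laplacePDF_Iic (hσ : 0 < σ) (t : ℝ) :
    IntegrableOn (laplacePDF μ σ) (Iic t) := by
  refine IntegrableOn.mono_set ?_ (Iic_subset_Iic_union_Icc (a := μ))
  refine IntegrableOn.union ?_ continuous_laplacePDF.integrableOn_Icc
  exact IntegrableOn.congr_fun ((integrableOn_exp_mul_Iic (inv_pos.2 hσ) μ).const_mul _)
    (fun x hx => (laplacePDF_of_le hx).symm) measurableSet_Iic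

lemma setIntegral_laplacePDF_Iic_of_le (hσ : 0 < σ) {t : ℝ} (ht : t ≤ μ) :
    ∫ x in Iic t, laplacePDF μ σ x = exp ((t - μ) / σ) / 2 := by
  rw [setIntegral_congr_fun measurableSet_Iic fun x hx => laplacePDF_of_le (hx.out.trans ht),
    integral_const_mul, integral_exp_mul_Iic (inv_pos.2 hσ), div_inv_eq_mul, sub_div]
  field_simp
  rw [mul_comm, ← exp_add]
  ring_nf

lemma setIntegral_laplacePDF_Iic (hσ : 0 < σ) (t : ℝ) :
    ∫ x in Iic t, laplacePDF μ σ x = laplaceCDF μ σ t := by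
  rcases le_or_gt t μ with ht | ht
  · rw [setIntegral_laplacePDF_Iic_of_le hσ ht, laplaceCDF, if_pos ht]
  have hderiv : ∀ x ∈ uIcc μ t,
      HasDerivAt (fun x => -1 / 2 * exp ((μ - x) / σ)) (laplacePDF μ σ x) x := fun x hx => by
    rw [uIcc_of_le ht.le] at hx
    rw [laplacePDF, abs_of_nonneg (sub_nonneg.2 hx.1), neg_sub]
    exact ((((hasDerivAt_id' x).const_sub μ).div_const σ).exp.const_mul (-1 / 2)).congr_deriv
      (by field_simp)
  rw [← sub_add_cancel (∫ x in Iic t, _) (∫ x in Iic μ, laplacePDF μ σ x),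
    intervalIntegral.integral_Iic_sub_Iic (integrableOn_laplacePDF_Iic hσ μ)
      (integrableOn_laplacePDF_Iic hσ t),
    intervalIntegral.integral_eq_sub_of_hasDerivAt hderiv
      (continuous_laplacePDF.intervalIntegrable _ _),
    setIntegral_laplacePDF_Iic_of_le hσ le_rfl, laplaceCDF, if_neg ht.not_ge, neg_sub]
  simp only [sub_self, zero_div, exp_zero]
  ring

lemma laplaceMeasure_Iic (hσ : 0 < σ) (t : ℝ) :
    laplaceMeasure μ σ (Iic t) = ENNReal.ofReal (laplaceCDF μ σ t) := by
  rw [laplaceMeasure, withDensity_apply _ measurableSet_Iic,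
    ← ofReal_integral_eq_lintegral_ofReal (integrableOn_laplacePDF_Iic hσ t)
      (ae_of_all _ (laplacePDF_nonneg hσ.le)), setIntegral_laplacePDF_Iic hσ t]

lemma laplaceCDF_nonneg (hσ : 0 < σ) (t : ℝ) : 0 ≤ laplaceCDF μ σ t := by
  rw [← setIntegral_laplacePDF_Iic hσ]
  exact setIntegral_nonneg measurableSet_Iic fun x _ => laplacePDF_nonneg hσ.le x

lemma cdf_eq_laplaceCDF_iff (ν : Measure ℝ) [IsProbabilityMeasure ν] (hσ : 0 < σ) :
    ⇑(cdf ν) = laplaceCDF μ σ ↔ ν = laplaceMeasure μ σ := by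
  constructor
  · intro h
    refine Measure.ext_of_Iic ν _ fun t => ?_
    rw [← ofReal_cdf, h, laplaceMeasure_Iic hσ]
  · rintro rfl
    funext t
    rw [cdf_eq_real, measureReal_def, laplaceMeasure_Iic hσ,
      ENNReal.toReal_ofReal (laplaceCDF_nonneg hσ t)]

/-- For the Laplace law, this is `σ p = H` (see `setIntegral_Iio_sign_sub`). -/
lemma mul_laplacePDF (hσ : σ ≠ 0) (s : ℝ) :
    σ * laplacePDF μ σ s = 2 * laplaceCDF μ σ (min s μ) - laplaceCDF μ σ s := by
  rcases le_or_gt s μ with hs | hs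
  · rw [min_eq_left hs, laplaceCDF, if_pos hs, laplacePDF, abs_of_nonpos (sub_nonpos.2 hs)]
    field_simp
    ring_nf
  · rw [min_eq_right hs.le, laplaceCDF, if_pos le_rfl, laplaceCDF, if_neg hs.not_ge, laplacePDF,
      abs_of_pos (sub_pos.2 hs), sub_self, zero_div, exp_zero]
    field_simp
    ring

end Laplace

section Fubini

variable {ν : Measure ℝ} {g : ℝ → ℝ} {t : ℝ}

lemma indicator_lt_le_apply (g : ℝ → ℝ) (x s : ℝ) :
    {p : ℝ × ℝ | p.1 < p.2 ∧ p.2 ≤ t}.indicator (fun p => g p.1) (x, s) =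
      (Ioc x t).indicator (fun _ => g x) s := by
  simp [indicator_apply]

lemma integral_indicator_lt_le_left (g : ℝ → ℝ) (x : ℝ) :
    ∫ s, {p : ℝ × ℝ | p.1 < p.2 ∧ p.2 ≤ t}.indicator (fun p => g p.1) (x, s) =
      max (t - x) 0 * g x := by
  simp_rw [indicator_lt_le_apply]
  rw [integral_indicator_const _ measurableSet_Ioc, volume_real_Ioc, smul_eq_mul]

lemma integral_indicator_lt_le_right (s : ℝ) :
    ∫ x, {p : ℝ × ℝ | p.1 < p.2 ∧ p.2 ≤ t}.indicator (fun p => g p.1) (x, s) ∂ν =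
      (Iic t).indicator (fun s => ∫ x in Iio s, g x ∂ν) s := by
  simp_rw [indicator_lt_le_apply]
  by_cases hs : s ≤ t
  · rw [indicator_of_mem (mem_Iic.2 hs), ← integral_indicator measurableSet_Iio]
    congr with x
    simp [indicator_apply, hs]
  · simp [hs]

lemma integrable_indicator_lt_le (hg : Measurable g)
    (hint : Integrable (fun x => g x * max (t - x) 0) ν) :
    Integrable ({p : ℝ × ℝ | p.1 < p.2 ∧ p.2 ≤ t}.indicator fun p => g p.1) (ν.prod volume) := by
  have hK : MeasurableSet {p : ℝ × ℝ | p.1 < p.2 ∧ p.2 ≤ t} :=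
    (measurableSet_lt measurable_fst measurable_snd).inter
      (measurableSet_le measurable_snd measurable_const)
  have hm : Measurable ({p : ℝ × ℝ | p.1 < p.2 ∧ p.2 ≤ t}.indicator fun p => g p.1) :=
    (hg.comp measurable_fst).indicator hK
  refine (integrable_prod_iff hm.aestronglyMeasurable).2 ⟨ae_of_all _ fun x => ?_, ?_⟩
  · simp_rw [indicator_lt_le_apply]
    exact (integrableOn_const measure_Ioc_lt_top.ne).integrable_indicator measurableSet_Ioc
  · simp_rw [norm_indicator_eq_indicator_norm]
    refine hint.norm.congr (ae_of_all _ fun x => ?_)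
    dsimp only
    rw [integral_indicator_lt_le_left (fun x => ‖g x‖), norm_mul,
      norm_of_nonneg (le_max_right _ _), mul_comm]

lemma integral_mul_max_sub_eq_setIntegral_Iic [SFinite ν] (hg : Measurable g)
    (hint : Integrable (fun x => g x * max (t - x) 0) ν) :
    ∫ x, g x * max (t - x) 0 ∂ν = ∫ s in Iic t, ∫ x in Iio s, g x ∂ν := by
  rw [← integral_indicator measurableSet_Iic]
  simp_rw [← integral_indicator_lt_le_right, mul_comm (g _), ← integral_indicator_lt_le_left g]
  exact integral_integral_swap (integrable_indicator_lt_le hg hint)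

lemma integrableOn_setIntegral_Iio [SFinite ν] (hg : Measurable g)
    (hint : Integrable (fun x => g x * max (t - x) 0) ν) :
    IntegrableOn (fun s => ∫ x in Iio s, g x ∂ν) (Iic t) := by
  have := (integrable_indicator_lt_le hg hint).integral_prod_right
  simp_rw [integral_indicator_lt_le_right] at this
  exact (integrable_indicator_iff measurableSet_Iic).1 this

end Fubini

lemma measurable_real_sign : Measurable Real.sign :=
  Measurable.ite measurableSet_Iio measurable_const
    (Measurable.ite measurableSet_Ioi measurable_const measurable_const)

lemma integrable_sign_sub_mul_max_sub {ν : Measure ℝ} [IsFiniteMeasure ν] (hν : Integrable id ν)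
    (μ t : ℝ) : Integrable (fun x => Real.sign (μ - x) * max (t - x) 0) ν :=
  ((integrable_const t).sub hν).pos_part.bdd_mul (c := 1)
    (measurable_real_sign.comp (measurable_const.sub measurable_id)).aestronglyMeasurable
    (ae_of_all _ fun x => by rcases Real.sign_apply_eq (μ - x) with h | h | h <;> simp [h])

lemma setIntegral_Iio_sign_sub (ν : Measure ℝ) [IsProbabilityMeasure ν] [NullSingletonClass ν]
    (μ s : ℝ) : ∫ x in Iio s, Real.sign (μ - x) ∂ν = 2 * cdf ν (min s μ) - cdf ν s := by
  have hae : (fun x => Real.sign (μ - x)) =ᵐ[ν.restrict (Iio s)]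
      fun x => 2 * (Iio μ).indicator 1 x - 1 := by
    refine ae_restrict_of_ae ((Measure.ae_ne ν μ).mono fun x hx => ?_)
    dsimp only
    rcases hx.lt_or_gt with h | h
    · rw [sign_of_pos (sub_pos.2 h), indicator_of_mem (mem_Iio.2 h)]; norm_num
    · rw [sign_of_neg (sub_neg.2 h), indicator_of_notMem (notMem_Iio.2 h.le)]; norm_num
  have hind : Integrable ((Iio μ).indicator (1 : ℝ → ℝ)) (ν.restrict (Iio s)) :=
    (integrable_const 1).indicator measurableSet_Iio
  rw [integral_congr_ae hae, integral_sub (hind.const_mul 2) (integrable_const 1),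
    integral_const_mul, integral_indicator_one measurableSet_Iio, integral_const,
    measureReal_restrict_apply measurableSet_Iio, Iio_inter_Iio, measureReal_restrict_apply_univ,
    cdf_eq_real, cdf_eq_real, measureReal_congr Iio_ae_eq_Iic, measureReal_congr Iio_ae_eq_Iic,
    min_comm, smul_eq_mul, mul_one]

lemma nullSingletonClass_of_continuous_cdf (ν : Measure ℝ) [IsProbabilityMeasure ν]
    (h : Continuous (cdf ν)) : NullSingletonClass ν where
  measure_singleton a := by
    rw [← measure_cdf ν, StieltjesFunction.measure_singleton,
      h.continuousWithinAt.leftLim_eq, sub_self, ENNReal.ofReal_zero]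

lemma continuous_setIntegral_Iic {f : ℝ → ℝ} (hf : ∀ t, IntegrableOn f (Iic t)) :
    Continuous fun t => ∫ s in Iic t, f s := by
  have hII : ∀ a b, IntervalIntegrable f volume a b := fun a b =>
    ((hf (max a b)).mono_set Icc_subset_Iic_self).intervalIntegrable
  refine ((intervalIntegral.continuous_primitive hII 0).const_add (∫ s in Iic 0, f s)).congr
    fun t => ?_
  rw [← intervalIntegral.integral_Iic_sub_Iic (hf 0) (hf t), add_sub_cancel]

theorem eq_mul_exp_of_eq_add_mul_integral {g : ℝ → ℝ} {a b k : ℝ}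
    (hg : ContinuousOn g (Icc a b)) (h : ∀ t ∈ Icc a b, g t = g a + k * ∫ s in a..t, g s) :
    ∀ t ∈ Icc a b, g t = g a * exp (k * (t - a)) := by
  have hderiv : ∀ x ∈ Ico a b, HasDerivWithinAt g (k * g x) (Ici x) x := by
    intro x hx
    have hx' : x ∈ Icc a b := Ico_subset_Icc_self hx
    have hGT : Icc a b ∈ 𝓝[>] x := Icc_mem_nhdsGT_of_mem hx
    have hprim : HasDerivWithinAt (fun t => ∫ s in a..t, g s) (g x) (Ici x) x :=
      intervalIntegral.integral_hasDerivWithinAt_right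
        ((hg.mono (Icc_subset_Icc_right hx.2.le)).intervalIntegrable_of_Icc hx.1)
        ⟨Icc a b, hGT, hg.aestronglyMeasurable measurableSet_Icc⟩
        ((hg x hx').mono_of_mem_nhdsWithin hGT)
    exact ((hprim.const_mul k).const_add (g a)).congr_of_eventuallyEq
      (eventually_of_mem (Icc_mem_nhdsGE_of_mem hx) h) (h x hx')
  have hconst := constant_of_has_deriv_right_zero (f := fun t => exp (-k * (t - a)) * g t)
    ((by fun_prop : Continuous fun t => exp (-k * (t - a))).continuousOn.mul hg)
    fun x hx => ((((hasDerivAt_id' x).sub_const a).const_mul (-k)).exp.hasDerivWithinAt.mul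
      (hderiv x hx)).congr_deriv (by ring)
  intro t ht
  have := hconst t ht
  simp only [sub_self, mul_zero, exp_zero, one_mul] at this
  rw [← this, mul_right_comm, ← exp_add, neg_mul, neg_add_cancel, exp_zero, one_mul]

section IntegralEquation

variable {F : ℝ → ℝ} {μ σ : ℝ}

lemma eq_mul_exp_of_le_of_integral_eq (hF : Continuous F)
    (heq : ∀ a t, a ≤ t → F t = F a + σ⁻¹ * ∫ s in a..t, (2 * F (min s μ) - F s))
    {t : ℝ} (ht : t ≤ μ) : F t = F μ * exp ((t - μ) / σ) := by
  have h := eq_mul_exp_of_eq_add_mul_integral hF.continuousOn (fun u hu => by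
    rw [heq t u hu.1]
    congr 2
    refine intervalIntegral.integral_congr fun s hs => ?_
    rw [uIcc_of_le hu.1] at hs
    rw [min_eq_left (hs.2.trans hu.2)]
    ring) μ ⟨ht, le_rfl⟩
  rw [h, mul_assoc, ← exp_add, show σ⁻¹ * (μ - t) + (t - μ) / σ = 0 by ring, exp_zero, mul_one]

lemma eq_two_mul_sub_mul_exp_of_ge_of_integral_eq (hF : Continuous F)
    (heq : ∀ a t, a ≤ t → F t = F a + σ⁻¹ * ∫ s in a..t, (2 * F (min s μ) - F s))
    {t : ℝ} (ht : μ ≤ t) : F t = 2 * F μ - F μ * exp (-(t - μ) / σ) := by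
  have h := eq_mul_exp_of_eq_add_mul_integral (g := fun u => 2 * F μ - F u) (k := -σ⁻¹)
    (continuous_const.sub hF).continuousOn (fun u hu => by
      rw [heq μ u hu.1]
      have : ∫ s in μ..u, (2 * F (min s μ) - F s) = ∫ s in μ..u, (2 * F μ - F s) := by
        refine intervalIntegral.integral_congr fun s hs => ?_
        rw [uIcc_of_le hu.1] at hs
        rw [min_eq_right hs.1]
      rw [this]
      ring) t ⟨ht, le_rfl⟩
  rw [show -σ⁻¹ * (t - μ) = -(t - μ) / σ by ring] at h
  linear_combination -h

theorem eq_laplaceCDF_of_integral_eq (hσ : 0 < σ) (hF : Continuous F)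
    (hF1 : Tendsto F atTop (𝓝 1))
    (heq : ∀ a t, a ≤ t → F t = F a + σ⁻¹ * ∫ s in a..t, (2 * F (min s μ) - F s)) :
    F = laplaceCDF μ σ := by
  have hexp : Tendsto (fun t => exp (-(t - μ) / σ)) atTop (𝓝 0) :=
    tendsto_exp_atBot.comp (Tendsto.atBot_div_const hσ (tendsto_neg_atTop_atBot.comp
      (tendsto_atTop_add_const_right _ (-μ) tendsto_id)))
  have hhalf : F μ = 1 / 2 := by
    have h2 : Tendsto F atTop (𝓝 (2 * F μ - F μ * 0)) :=
      (tendsto_const_nhds.sub (tendsto_const_nhds.mul hexp)).congr' <|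
        (eventually_ge_atTop μ).mono fun t ht =>
          (eq_two_mul_sub_mul_exp_of_ge_of_integral_eq hF heq ht).symm
    linarith [tendsto_nhds_unique h2 hF1]
  funext t
  rcases le_or_gt t μ with ht | ht
  · rw [eq_mul_exp_of_le_of_integral_eq hF heq ht, hhalf, laplaceCDF, if_pos ht]
    ring
  · rw [eq_two_mul_sub_mul_exp_of_ge_of_integral_eq hF heq ht.le, hhalf, laplaceCDF,
      if_neg ht.not_ge]
    ring

end IntegralEquation

theorem eq_laplaceMeasure_iff (ν : Measure ℝ) [IsProbabilityMeasure ν] (hν : Integrable id ν)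
    {μ σ : ℝ} (hσ : 0 < σ) :
    ν = laplaceMeasure μ σ ↔
      ∀ t, cdf ν t = σ⁻¹ * ∫ x, Real.sign (μ - x) * max (t - x) 0 ∂ν := by
  have hsign : Measurable fun x => Real.sign (μ - x) :=
    measurable_real_sign.comp (measurable_const.sub measurable_id)
  have hint := integrable_sign_sub_mul_max_sub hν μ
  simp_rw [integral_mul_max_sub_eq_setIntegral_Iic hsign (hint _)]
  constructor
  · rintro rfl t
    have hF := (cdf_eq_laplaceCDF_iff (laplaceMeasure μ σ) hσ).2 rfl
    simp_rw [setIntegral_Iio_sign_sub, hF, ← mul_laplacePDF hσ.ne', integral_const_mul,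
      inv_mul_cancel_left₀ hσ.ne', setIntegral_laplacePDF_Iic hσ]
  · intro h
    have hH : ∀ t, IntegrableOn (fun s => ∫ x in Iio s, Real.sign (μ - x) ∂ν) (Iic t) :=
      fun t => integrableOn_setIntegral_Iio hsign (hint t)
    have hcont : Continuous (cdf ν) :=
      ((continuous_setIntegral_Iic hH).const_mul σ⁻¹).congr fun t => (h t).symm
    have := nullSingletonClass_of_continuous_cdf ν hcont
    refine (cdf_eq_laplaceCDF_iff ν hσ).1 (eq_laplaceCDF_of_integral_eq hσ hcont
      (tendsto_cdf_atTop ν) fun a t _ => ?_)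
    simp_rw [← setIntegral_Iio_sign_sub, ← intervalIntegral.integral_Iic_sub_Iic (hH a) (hH t)]
    rw [h t, h a]
    ring

lemma sub_mul_indicator_Iic (t x : ℝ) :
    (t - x) * (Iic t).indicator (fun _ => (1 : ℝ)) x = max (t - x) 0 := by
  by_cases hx : x ≤ t
  · rw [indicator_of_mem (mem_Iic.2 hx), mul_one, max_eq_left (sub_nonneg.2 hx)]
  · rw [indicator_of_notMem (notMem_Iic.2 (not_le.1 hx)), mul_zero,
      max_eq_right (sub_nonpos.2 (not_le.1 hx).le)]

theorem laplace_fixed_point_characterization_general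
    {Ω : Type*} [MeasurableSpace Ω] (ℙ : Measure Ω) [IsProbabilityMeasure ℙ]
    (X : Ω → ℝ) (hX : Measurable X)
    (μ σ : ℝ) (hσ : 0 < σ)
    (hXint : Integrable X ℙ) :
    Measure.map X ℙ = volume.withDensity
        (fun x => ENNReal.ofReal ((1 / (2 * σ)) * Real.exp (-|x - μ| / σ))) ↔
      ∀ t : ℝ, (ℙ {ω | X ω ≤ t}).toReal =
        ∫ ω, Real.sign (μ - X ω) / σ * (t - X ω) *
          Set.indicator (Iic t) (fun _ => (1 : ℝ)) (X ω) ∂ℙ := by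
  have := Measure.isProbabilityMeasure_map (μ := ℙ) hX.aemeasurable
  have hν : Integrable id (ℙ.map X) :=
    (integrable_map_measure aestronglyMeasurable_id hX.aemeasurable).2 hXint
  have hcdf : ∀ t, (ℙ {ω | X ω ≤ t}).toReal = cdf (ℙ.map X) t := fun t => by
    rw [cdf_eq_real, map_measureReal_apply hX measurableSet_Iic]
    rfl
  have hrhs : ∀ t, ∫ ω, Real.sign (μ - X ω) / σ * (t - X ω) *
      (Iic t).indicator (fun _ => 1) (X ω) ∂ℙ =
        σ⁻¹ * ∫ x, Real.sign (μ - x) * max (t - x) 0 ∂(ℙ.map X) := fun t => by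
    rw [integral_map hX.aemeasurable
      (integrable_sign_sub_mul_max_sub hν μ t).aestronglyMeasurable, ← integral_const_mul]
    congr with ω
    rw [mul_assoc, sub_mul_indicator_Iic]
    ring
  simp_rw [hcdf, hrhs]
  exact eq_laplaceMeasure_iff _ hν hσ

theorem laplace_fixed_point_characterization
    {Ω : Type*} [MeasurableSpace Ω] (ℙ : Measure Ω) [IsProbabilityMeasure ℙ]
    (X : Ω → ℝ) (hX : Measurable X)
    (μ σ : ℝ) (hσ : 0 < σ)
    (hXint : Integrable X ℙ)
    (hatom : ℙ {ω | X ω = μ} = 0) :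
    Measure.map X ℙ = volume.withDensity
        (fun x => ENNReal.ofReal ((1 / (2 * σ)) * Real.exp (-|x - μ| / σ))) ↔
      ∀ t : ℝ, (ℙ {ω | X ω ≤ t}).toReal =
        ∫ ω, Real.sign (μ - X ω) / σ * (t - X ω) *
          Set.indicator (Iic t) (fun _ => (1 : ℝ)) (X ω) ∂ℙ :=
  laplace_fixed_point_characterization_general ℙ X hX μ σ hσ hXint
end

section
/- Let p be a positive, continuously differentiable probability density on (0,∞) satisfying ∫_0^∞ x|p'(x)|dx < ∞, P(x)/p(x) → 0 as x → 0⁺, (1−P(x))/p(x) → 0 as x → ∞, and sup_{x>0}|p'(x)·min{P(x),1−P(x)}/p(x)²| < ∞. Let X be a positive random variable with E|(p'(X)/p(X))·X| < ∞. Then X has density p if and only if F_X(t) = E[−(p'(X)/p(X))·min{X, t}] for all t > 0. -/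
/-!
Write `w = -p'/p` and `g(s) = E[w(X); X > s]`. Since `min(x, t) = ∫₀ᵗ 1[s < x] ds`, Fubini gives
`E[w(X) min(X, t)] = ∫₀ᵗ g`. If `X` has density `p`, then `g(s) = -∫ₛ^∞ p' = p(s)`, so the right
side is `P(t) = F_X(t)`.

Conversely, suppose `F_X(t) = ∫₀ᵗ g`. Then `F_X` is continuous, so `X` has no atoms and `g` is
continuous on `(0, ∞)`; being the derivative of `F_X`, it is nonnegative and is the density of `X`.
Then `g(s) = ∫ₛ^∞ g w`, i.e. `g' = g p'/p`, so `g / p` is constant, and the constant is `1`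
because `g` and `p` are both probability densities.
-/

open MeasureTheory Real Filter Set Topology

lemma measurable_of_continuousOn_Ioi {p : ℝ → ℝ} (hp : ContinuousOn p (Ioi 0))
    (hp_zero : ∀ x ≤ 0, p x = 0) : Measurable p := by
  have : (Ioi (0 : ℝ)).piecewise p 0 = p := by
    ext x
    by_cases hx : 0 < x
    · simp [hx]
    · simp [hx, hp_zero x (not_lt.1 hx)]
  exact this ▸ hp.measurable_piecewise continuousOn_const measurableSet_Ioi

lemma integrableOn_Ioi_of_integrableOn_mul_norm {μ : Measure ℝ} {f : ℝ → ℝ}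
    (hf : AEStronglyMeasurable f μ) (h : IntegrableOn (fun x => x * ‖f x‖) (Ioi 0) μ)
    {s : ℝ} (hs : 0 < s) : IntegrableOn f (Ioi s) μ := by
  refine Integrable.mono' ((h.mono_set (Ioi_subset_Ioi hs.le)).const_mul s⁻¹) hf.restrict ?_
  filter_upwards [ae_restrict_mem measurableSet_Ioi] with x (hx : s < x)
  have : 1 ≤ s⁻¹ * x := by rw [le_inv_mul_iff₀ hs, mul_one]; exact hx.le
  rw [← mul_assoc]
  exact le_mul_of_one_le_left (norm_nonneg _) this

lemma setIntegral_withDensity_ofReal {d : ℝ → ℝ} (hd : Measurable d) {s : Set ℝ}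
    (hs : MeasurableSet s) (hd_nonneg : ∀ x ∈ s, 0 ≤ d x) (f : ℝ → ℝ) :
    ∫ x in s, f x ∂volume.withDensity (fun x => ENNReal.ofReal (d x)) = ∫ x in s, d x * f x := by
  rw [setIntegral_withDensity_eq_setIntegral_toReal_smul hd.ennreal_ofReal
    (ae_of_all _ fun _ => ENNReal.ofReal_lt_top) f hs]
  refine setIntegral_congr_fun hs fun x hx => ?_
  rw [ENNReal.toReal_ofReal (hd_nonneg x hx), smul_eq_mul]

lemma integral_Ioi_of_hasDerivAt_of_integrableOn {p p' : ℝ → ℝ} {s : ℝ}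
    (hderiv : ∀ x ∈ Ici s, HasDerivAt p (p' x) x) (hp'_int : IntegrableOn p' (Ioi s))
    (hp_int : IntegrableOn p (Ioi s)) : ∫ x in Ioi s, p' x = -p s := by
  have hlim : Tendsto p atTop (𝓝 0) := tendsto_zero_of_hasDerivAt_of_integrableOn_Ioi
    (fun x hx => hderiv x (Ioi_subset_Ici_self hx)) hp'_int hp_int
  rw [integral_Ioi_of_hasDerivAt_of_tendsto' hderiv hp'_int hlim, zero_sub]

lemma exists_eq_const_mul_of_hasDerivAt {g p g' p' : ℝ → ℝ} {s : Set ℝ} (hs : IsOpen s)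
    (hs' : IsPreconnected s) (hg : ∀ x ∈ s, HasDerivAt g (g' x) x)
    (hp : ∀ x ∈ s, HasDerivAt p (p' x) x) (hp_ne : ∀ x ∈ s, p x ≠ 0)
    (h : ∀ x ∈ s, g' x * p x = g x * p' x) : ∃ c, ∀ x ∈ s, g x = c * p x := by
  have h_quot : ∀ x ∈ s, HasDerivAt (fun x => g x / p x) 0 x := fun x hx => by
    have := (hg x hx).div (hp x hx) (hp_ne x hx)
    rwa [h x hx, sub_self, zero_div] at this
  obtain ⟨c, hc⟩ := hs.exists_is_const_of_deriv_eq_zero hs'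
    (fun x hx => (h_quot x hx).differentiableAt.differentiableWithinAt)
    (fun x hx => (h_quot x hx).deriv)
  exact ⟨c, fun x hx => by rw [← hc x hx, div_mul_cancel₀ _ (hp_ne x hx)]⟩

lemma hasDerivAt_setIntegral_Ioi_withDensity {d w : ℝ → ℝ} (hd : Measurable d)
    (hd_nonneg : ∀ x > 0, 0 ≤ d x) (hdw : ContinuousOn (fun x => d x * w x) (Ioi 0))
    (hw_int : ∀ a > 0, IntegrableOn w (Ioi a)
      (volume.withDensity fun x => ENNReal.ofReal (d x)))
    {s : ℝ} (hs : 0 < s) :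
    HasDerivAt (fun b => ∫ x in Ioi b, w x ∂volume.withDensity fun x => ENNReal.ofReal (d x))
      (-(d s * w s)) s := by
  set ν := volume.withDensity fun x => ENNReal.ofReal (d x)
  have ha : 0 < s / 2 := half_pos hs
  have h_eq : ∀ b ∈ Ioi (s / 2), ∫ x in Ioi b, w x ∂ν
      = (∫ x in Ioi (s / 2), w x ∂ν) - ∫ x in s / 2..b, d x * w x := fun b (hb : s / 2 < b) => by
    rw [intervalIntegral.integral_of_le hb.le, ← setIntegral_withDensity_ofReal hd
      measurableSet_Ioc fun x hx => hd_nonneg x (ha.trans hx.1),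
      ← intervalIntegral.integral_of_le hb.le, ← intervalIntegral.integral_Ioi_sub_Ioi
      (hw_int _ ha) hb.le, sub_sub_cancel]
  have h_int : IntervalIntegrable (fun x => d x * w x) volume (s / 2) s :=
    (hdw.mono fun x hx => by
      rw [uIcc_of_le (half_le_self hs.le)] at hx
      exact ha.trans_le hx.1).intervalIntegrable
  have := (intervalIntegral.integral_hasDerivAt_right h_int
    (hdw.stronglyMeasurableAtFilter isOpen_Ioi s hs)
    (hdw.continuousAt (Ioi_mem_nhds hs))).const_sub (∫ x in Ioi (s / 2), w x ∂ν)
  exact this.congr_of_eventuallyEq (eventually_of_mem (Ioi_mem_nhds (half_lt_self hs)) h_eq)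

section CDFDensity

variable {μ : Measure ℝ} {g : ℝ → ℝ}

lemma measureReal_Iic_eventuallyEq_primitive
    (hG : ∀ t, μ.real (Iic t) = ∫ s in Ioc 0 t, g s) {a : ℝ} (ha : 0 < a) :
    (fun t => μ.real (Iic t)) =ᶠ[𝓝 a] fun t => ∫ s in 0..t, g s := by
  filter_upwards [Ioi_mem_nhds ha] with t (ht : 0 < t)
  rw [hG t, intervalIntegral.integral_of_le ht.le]

lemma measure_singleton_eq_zero_of_measureReal_Iic_eq [IsProbabilityMeasure μ]
    (hg_int : ∀ t, IntegrableOn g (Ioc 0 t))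
    (hG : ∀ t, μ.real (Iic t) = ∫ s in Ioc 0 t, g s) (a : ℝ) : μ {a} = 0 := by
  rcases le_or_gt a 0 with ha | ha
  · refine measure_mono_null (singleton_subset_iff.2 (mem_Iic.2 ha)) ?_
    rw [← ENNReal.ofReal_toReal (measure_ne_top μ _), ← measureReal_def, hG, Ioc_self,
      Measure.restrict_empty, integral_zero_measure, ENNReal.ofReal_zero]
  have h_prim : ContinuousAt (fun t => ∫ s in 0..t, g s) a := by
    have h_on := intervalIntegral.continuousOn_primitive_interval' (μ := volume)
      ((intervalIntegrable_iff_integrableOn_Ioc_of_le (by linarith : (0:ℝ) ≤ a + 1)).2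
        (hg_int (a + 1))) (left_mem_uIcc : (0:ℝ) ∈ uIcc 0 (a + 1))
    rw [uIcc_of_le (by linarith)] at h_on
    exact h_on.continuousAt (Icc_mem_nhds ha (by linarith))
  have h_cdf : ContinuousAt (ProbabilityTheory.cdf μ) a := by
    have : ProbabilityTheory.cdf μ = fun t => μ.real (Iic t) :=
      funext (ProbabilityTheory.cdf_eq_real μ)
    rw [this]
    exact h_prim.congr (measureReal_Iic_eventuallyEq_primitive hG ha).symm
  rw [← ProbabilityTheory.measure_cdf μ, StieltjesFunction.measure_singleton,
    h_cdf.continuousWithinAt.leftLim_eq, sub_self, ENNReal.ofReal_zero]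

lemma nonneg_of_measureReal_Iic_eq [IsFiniteMeasure μ] (hg_int : ∀ t, IntegrableOn g (Ioc 0 t))
    (hG : ∀ t, μ.real (Iic t) = ∫ s in Ioc 0 t, g s) (hg : ContinuousOn g (Ioi 0)) {a : ℝ}
    (ha : 0 < a) : 0 ≤ g a := by
  have h_deriv : HasDerivAt (fun t => ∫ s in 0..t, g s) (g a) a :=
    intervalIntegral.integral_hasDerivAt_right
      ((intervalIntegrable_iff_integrableOn_Ioc_of_le ha.le).2 (hg_int a))
      (hg.stronglyMeasurableAtFilter isOpen_Ioi a ha) (hg.continuousAt (Ioi_mem_nhds ha))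
  exact (h_deriv.congr_of_eventuallyEq (measureReal_Iic_eventuallyEq_primitive hG ha)
    ).nonneg_of_monotone fun s t hst => measureReal_mono (Iic_subset_Iic.2 hst)

lemma withDensity_indicator_Ioi_apply_Iic {t : ℝ} (hg_int : IntegrableOn g (Ioc 0 t))
    (hg_nonneg : ∀ x ∈ Ioc 0 t, 0 ≤ g x) :
    volume.withDensity (fun x => ENNReal.ofReal ((Ioi 0).indicator g x)) (Iic t)
      = ENNReal.ofReal (∫ s in Ioc 0 t, g s) := by
  have h_ind : (fun x => ENNReal.ofReal ((Ioi 0).indicator g x))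
      = (Ioi 0).indicator fun x => ENNReal.ofReal (g x) :=
    (indicator_comp_of_zero ENNReal.ofReal_zero).symm
  rw [withDensity_apply _ measurableSet_Iic, h_ind, setLIntegral_indicator measurableSet_Ioi,
    Ioi_inter_Iic, ofReal_integral_eq_lintegral_ofReal hg_int
      (ae_restrict_of_forall_mem measurableSet_Ioc hg_nonneg)]

lemma eq_withDensity_of_measureReal_Iic_eq [IsFiniteMeasure μ]
    (hg_int : ∀ t, IntegrableOn g (Ioc 0 t))
    (hG : ∀ t, μ.real (Iic t) = ∫ s in Ioc 0 t, g s) (hg_nonneg : ∀ x > 0, 0 ≤ g x) :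
    μ = volume.withDensity fun x => ENNReal.ofReal ((Ioi 0).indicator g x) := by
  refine Measure.ext_of_Iic _ _ fun t => ?_
  rw [withDensity_indicator_Ioi_apply_Iic (hg_int t) fun x hx => hg_nonneg x hx.1, ← hG,
    measureReal_def, ENNReal.ofReal_toReal (measure_ne_top μ _)]

end CDFDensity

lemma setIntegral_Ioc_indicator_Iio_const {x t : ℝ} (hx : 0 ≤ x) (ht : 0 ≤ t) (c : ℝ) :
    ∫ s in Ioc 0 t, (Iio x).indicator (fun _ => c) s = min x t * c := by
  rw [setIntegral_indicator measurableSet_Iio, setIntegral_const, smul_eq_mul,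
    measureReal_congr ((ae_eq_refl _).inter Iio_ae_eq_Iic), Ioc_inter_Iic,
    volume_real_Ioc_of_le (le_min ht hx), sub_zero, min_comm]

noncomputable def tailIntegral (μ : Measure ℝ) (w : ℝ → ℝ) (s : ℝ) : ℝ :=
  ∫ x in Ioi s, w x ∂μ

section TailIntegral

variable {μ : Measure ℝ} {w : ℝ → ℝ}

lemma integrableOn_tailIntegral_and_integral_mul_min [SFinite μ] (hμ : ∀ᵐ x ∂μ, 0 < x)
    (hw : Measurable w) (hw_int : Integrable (fun x => w x * x) μ) {t : ℝ} (ht : 0 ≤ t) :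
    IntegrableOn (tailIntegral μ w) (Ioc 0 t) ∧
      ∫ x, w x * min x t ∂μ = ∫ s in Ioc 0 t, tailIntegral μ w s := by
  set F : ℝ × ℝ → ℝ := {q | q.2 < q.1}.indicator fun q => w q.1
  have hF_meas : Measurable F :=
    (hw.comp measurable_fst).indicator (measurableSet_lt measurable_snd measurable_fst)
  have hF_left : ∀ x, (fun s => F (x, s)) = (Iio x).indicator fun _ => w x := fun x => by
    ext s; simp [F, indicator_apply]
  have hF_right : ∀ s, (fun x => F (x, s)) = (Ioi s).indicator w := fun s => by
    ext x; simp [F, indicator_apply]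
  have hF_int : Integrable F (μ.prod (volume.restrict (Ioc 0 t))) := by
    refine (integrable_prod_iff hF_meas.aestronglyMeasurable).2 ⟨ae_of_all _ fun x => ?_, ?_⟩
    · rw [hF_left]
      exact (integrable_const (w x)).indicator measurableSet_Iio
    refine hw_int.norm.mono' hF_meas.norm.aestronglyMeasurable.integral_prod_right' ?_
    filter_upwards [hμ] with x hx
    have h_norm : ∀ s, ‖F (x, s)‖ = (Iio x).indicator (fun _ => ‖w x‖) s := fun s => by
      rw [← norm_indicator_eq_indicator_norm]
      exact congrArg norm (congrFun (hF_left x) s)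
    simp only [h_norm]
    rw [setIntegral_Ioc_indicator_Iio_const hx.le ht, norm_mul, norm_mul, norm_norm,
      Real.norm_of_nonneg hx.le, Real.norm_of_nonneg (le_min hx.le ht), mul_comm]
    exact mul_le_mul_of_nonneg_left (min_le_left x t) (norm_nonneg _)
  have h_tail := hF_int.integral_prod_right
  simp only [hF_right, integral_indicator measurableSet_Ioi] at h_tail
  refine ⟨h_tail, ?_⟩
  calc ∫ x, w x * min x t ∂μ = ∫ x, (∫ s in Ioc 0 t, F (x, s)) ∂μ := by
        refine integral_congr_ae ?_
        filter_upwards [hμ] with x hx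
        rw [hF_left, setIntegral_Ioc_indicator_Iio_const hx.le ht, mul_comm]
    _ = ∫ s in Ioc 0 t, ∫ x, F (x, s) ∂μ := integral_integral_swap hF_int
    _ = _ := by simp only [hF_right, integral_indicator measurableSet_Ioi]; rfl

lemma integrableOn_tailIntegral_Ioc [SFinite μ] (hμ : ∀ᵐ x ∂μ, 0 < x) (hw : Measurable w)
    (hw_int : Integrable (fun x => w x * x) μ) (t : ℝ) :
    IntegrableOn (tailIntegral μ w) (Ioc 0 t) := by
  rcases le_total 0 t with ht | ht
  · exact (integrableOn_tailIntegral_and_integral_mul_min hμ hw hw_int ht).1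
  · simp [Ioc_eq_empty_of_le ht]

lemma measureReal_Iic_eq_integral_tailIntegral [SFinite μ] (hμ : ∀ᵐ x ∂μ, 0 < x)
    (hw : Measurable w) (hw_int : Integrable (fun x => w x * x) μ)
    (h : ∀ t > 0, μ.real (Iic t) = ∫ x, w x * min x t ∂μ) (t : ℝ) :
    μ.real (Iic t) = ∫ s in Ioc 0 t, tailIntegral μ w s := by
  rcases lt_or_ge 0 t with ht | ht
  · rw [h t ht, (integrableOn_tailIntegral_and_integral_mul_min hμ hw hw_int ht.le).2]
  · have h_null : μ (Iic t) = 0 :=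
      measure_mono_null (fun x (hx : x ≤ t) => not_lt.2 (hx.trans ht)) (ae_iff.1 hμ)
    simp [measureReal_def, h_null, Ioc_eq_empty_of_le ht]

lemma integrableOn_Ioi_of_integrable_mul_id (hw : Measurable w)
    (hw_int : Integrable (fun x => w x * x) μ) {a : ℝ} (ha : 0 < a) :
    IntegrableOn w (Ioi a) μ :=
  integrableOn_Ioi_of_integrableOn_mul_norm hw.aestronglyMeasurable
    (hw_int.norm.integrableOn.congr_fun (fun x (hx : 0 < x) => by
      change ‖w x * x‖ = x * ‖w x‖
      rw [norm_mul, Real.norm_of_nonneg hx.le, mul_comm]) measurableSet_Ioi) ha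

variable [IsProbabilityMeasure μ]

lemma continuousOn_tailIntegral (hμ : ∀ᵐ x ∂μ, 0 < x) (hw : Measurable w)
    (hw_int : Integrable (fun x => w x * x) μ)
    (h : ∀ t > 0, μ.real (Iic t) = ∫ x, w x * min x t ∂μ) :
    ContinuousOn (tailIntegral μ w) (Ioi 0) := by
  have : NullSingletonClass μ := ⟨measure_singleton_eq_zero_of_measureReal_Iic_eq
    (integrableOn_tailIntegral_Ioc hμ hw hw_int)
    (measureReal_Iic_eq_integral_tailIntegral hμ hw hw_int h)⟩
  intro s (hs : 0 < s)
  have h_cont := (integrableOn_Ioi_of_integrable_mul_id hw hw_int (half_pos hs)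
    ).continuousOn_Ici_primitive_Ioi s (half_le_self hs.le)
  exact (h_cont.continuousAt (Ici_mem_nhds (half_lt_self hs))).continuousWithinAt

lemma tailIntegral_nonneg (hμ : ∀ᵐ x ∂μ, 0 < x) (hw : Measurable w)
    (hw_int : Integrable (fun x => w x * x) μ)
    (h : ∀ t > 0, μ.real (Iic t) = ∫ x, w x * min x t ∂μ) {s : ℝ} (hs : 0 < s) :
    0 ≤ tailIntegral μ w s :=
  nonneg_of_measureReal_Iic_eq (integrableOn_tailIntegral_Ioc hμ hw hw_int)
    (measureReal_Iic_eq_integral_tailIntegral hμ hw hw_int h)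
    (continuousOn_tailIntegral hμ hw hw_int h) hs

lemma eq_withDensity_tailIntegral (hμ : ∀ᵐ x ∂μ, 0 < x) (hw : Measurable w)
    (hw_int : Integrable (fun x => w x * x) μ)
    (h : ∀ t > 0, μ.real (Iic t) = ∫ x, w x * min x t ∂μ) :
    μ = volume.withDensity fun x => ENNReal.ofReal ((Ioi 0).indicator (tailIntegral μ w) x) :=
  eq_withDensity_of_measureReal_Iic_eq (integrableOn_tailIntegral_Ioc hμ hw hw_int)
    (measureReal_Iic_eq_integral_tailIntegral hμ hw hw_int h)
    fun _ => tailIntegral_nonneg hμ hw hw_int h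

lemma hasDerivAt_tailIntegral (hμ : ∀ᵐ x ∂μ, 0 < x) (hw : Measurable w)
    (hw_int : Integrable (fun x => w x * x) μ)
    (h : ∀ t > 0, μ.real (Iic t) = ∫ x, w x * min x t ∂μ) (hw_cont : ContinuousOn w (Ioi 0))
    {s : ℝ} (hs : 0 < s) :
    HasDerivAt (tailIntegral μ w) (-(tailIntegral μ w s * w s)) s := by
  have hg_cont := continuousOn_tailIntegral hμ hw hw_int h
  have hμ_eq := eq_withDensity_tailIntegral hμ hw hw_int h
  have h_ind : EqOn ((Ioi 0).indicator (tailIntegral μ w)) (tailIntegral μ w) (Ioi 0) :=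
    fun x hx => indicator_of_mem hx _
  have key := hasDerivAt_setIntegral_Ioi_withDensity
    (measurable_of_continuousOn_Ioi (hg_cont.congr h_ind)
      fun x hx => indicator_of_notMem (not_lt.2 hx) _)
    (fun x hx => h_ind hx ▸ tailIntegral_nonneg hμ hw hw_int h hx)
    ((hg_cont.mul hw_cont).congr fun x hx => by rw [h_ind hx]; rfl)
    (fun a ha => hμ_eq ▸ integrableOn_Ioi_of_integrable_mul_id hw hw_int ha) hs
  rw [← hμ_eq, h_ind hs] at key
  exact key

end TailIntegral

section Density

variable {p : ℝ → ℝ}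

lemma lintegral_ofReal_eq_one (hp_nonneg : ∀ x > 0, 0 ≤ p x) (hp_zero : ∀ x ≤ 0, p x = 0)
    (hp_int : ∫ x in Ioi 0, p x = 1) : ∫⁻ x, ENNReal.ofReal (p x) = 1 := by
  have h_out : ∀ x ∉ Ioi (0 : ℝ), p x = 0 := fun x hx => hp_zero x (not_lt.1 hx)
  have h_int : Integrable p :=
    IntegrableOn.integrable_of_forall_notMem_eq_zero
      (Integrable.of_integral_ne_zero (by rw [hp_int]; exact one_ne_zero)) h_out
  rw [← ofReal_integral_eq_lintegral_ofReal h_int (ae_of_all _ fun x => ?_),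
    ← setIntegral_eq_integral_of_forall_compl_eq_zero h_out, hp_int, ENNReal.ofReal_one]
  rcases le_or_gt x 0 with hx | hx
  · exact (hp_zero x hx).ge
  · exact hp_nonneg x hx

lemma setIntegral_Ioi_neg_logDeriv_withDensity (hp_pos : ∀ x > 0, 0 < p x)
    (hp_deriv : ∀ x > 0, HasDerivAt p (deriv p x) x) (hp_meas : Measurable p) {s : ℝ} (hs : 0 < s)
    (hp_int : IntegrableOn p (Ioi s)) (hp'_int : IntegrableOn (deriv p) (Ioi s)) :
    ∫ x in Ioi s, -(deriv p x / p x) ∂volume.withDensity (fun x => ENNReal.ofReal (p x)) = p s := by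
  rw [setIntegral_withDensity_ofReal hp_meas measurableSet_Ioi
      fun x hx => (hp_pos x (hs.trans hx)).le,
    setIntegral_congr_fun (g := fun x => -deriv p x) measurableSet_Ioi fun x (hx : s < x) => by
      field_simp [(hp_pos x (hs.trans hx)).ne'],
    integral_neg, integral_Ioi_of_hasDerivAt_of_integrableOn
      (fun x (hx : s ≤ x) => hp_deriv x (hs.trans_le hx)) hp'_int hp_int, neg_neg]

lemma eq_withDensity_of_measureReal_Iic_eq_integral_mul_min {μ : Measure ℝ}
    [IsProbabilityMeasure μ] (hμ : ∀ᵐ x ∂μ, 0 < x) (hp_pos : ∀ x > 0, 0 < p x)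
    (hp_smooth : ContDiffOn ℝ 1 p (Ioi 0)) (hp_zero : ∀ x ≤ 0, p x = 0)
    (hp_int : ∫ x in Ioi 0, p x = 1)
    (hw_int : Integrable (fun x => -(deriv p x / p x) * x) μ)
    (h : ∀ t > 0, μ.real (Iic t) = ∫ x, -(deriv p x / p x) * min x t ∂μ) :
    μ = volume.withDensity fun x => ENNReal.ofReal (p x) := by
  set w : ℝ → ℝ := fun x => -(deriv p x / p x)
  have hp_meas := measurable_of_continuousOn_Ioi hp_smooth.continuousOn hp_zero
  have hw_meas : Measurable w := ((measurable_deriv p).div hp_meas).neg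
  have hw_cont : ContinuousOn w (Ioi 0) :=
    ((hp_smooth.continuousOn_deriv_of_isOpen isOpen_Ioi le_rfl).div hp_smooth.continuousOn
      fun x hx => (hp_pos x hx).ne').neg
  obtain ⟨c, hc⟩ := exists_eq_const_mul_of_hasDerivAt isOpen_Ioi isPreconnected_Ioi
    (fun s hs => hasDerivAt_tailIntegral hμ hw_meas hw_int h hw_cont hs)
    (fun x hx => (hp_smooth.differentiableOn one_ne_zero).hasDerivAt (Ioi_mem_nhds hx))
    (fun x hx => (hp_pos x hx).ne')
    fun x hx => by simp only [w]; field_simp [(hp_pos x hx).ne']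
  have h_density : (Ioi 0).indicator (tailIntegral μ w) = fun x => c * p x := by
    ext x
    rcases le_or_gt x 0 with hx | hx
    · rw [indicator_of_notMem (show x ∉ Ioi (0 : ℝ) from not_lt.2 hx), hp_zero x hx, mul_zero]
    · rw [indicator_of_mem (show x ∈ Ioi (0 : ℝ) from hx), hc x hx]
  have hμ_eq := eq_withDensity_tailIntegral hμ hw_meas hw_int h
  rw [h_density] at hμ_eq
  have hc_nonneg : 0 ≤ c := nonneg_of_mul_nonneg_left
    (hc 1 (mem_Ioi.2 one_pos) ▸ tailIntegral_nonneg hμ hw_meas hw_int h one_pos) (hp_pos 1 one_pos)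
  have hc_one : ENNReal.ofReal c = 1 := by
    calc ENNReal.ofReal c = ENNReal.ofReal c * ∫⁻ x, ENNReal.ofReal (p x) := by
          rw [lintegral_ofReal_eq_one (fun x hx => (hp_pos x hx).le) hp_zero hp_int, mul_one]
      _ = μ univ := by
          rw [hμ_eq, withDensity_apply _ MeasurableSet.univ, Measure.restrict_univ,
            ← lintegral_const_mul _ hp_meas.ennreal_ofReal]
          simp only [ENNReal.ofReal_mul hc_nonneg]
      _ = 1 := measure_univ
  simpa [ENNReal.ofReal_eq_one.1 hc_one] using hμ_eq

theorem eq_withDensity_iff_measureReal_Iic_eq_integral_mul_min {μ : Measure ℝ}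
    [IsProbabilityMeasure μ] (hμ : ∀ᵐ x ∂μ, 0 < x) (hp_pos : ∀ x > 0, 0 < p x)
    (hp_smooth : ContDiffOn ℝ 1 p (Ioi 0)) (hp_zero : ∀ x ≤ 0, p x = 0)
    (hp_int : ∫ x in Ioi 0, p x = 1) (hp' : IntegrableOn (fun x => x * |deriv p x|) (Ioi 0))
    (hw_int : Integrable (fun x => -(deriv p x / p x) * x) μ) :
    μ = volume.withDensity (fun x => ENNReal.ofReal (p x)) ↔
      ∀ t > 0, μ.real (Iic t) = ∫ x, -(deriv p x / p x) * min x t ∂μ := by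
  refine ⟨?_, eq_withDensity_of_measureReal_Iic_eq_integral_mul_min hμ hp_pos hp_smooth hp_zero
    hp_int hw_int⟩
  rintro rfl t ht
  have hp_meas := measurable_of_continuousOn_Ioi hp_smooth.continuousOn hp_zero
  have hw_meas : Measurable fun x => -(deriv p x / p x) := ((measurable_deriv p).div hp_meas).neg
  have hp_integrable : IntegrableOn p (Ioi 0) :=
    Integrable.of_integral_ne_zero (by rw [hp_int]; exact one_ne_zero)
  have h_tail : EqOn (tailIntegral _ fun x => -(deriv p x / p x)) p (Ioc 0 t) := fun s hs =>
    setIntegral_Ioi_neg_logDeriv_withDensity hp_pos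
      (fun x hx => (hp_smooth.differentiableOn one_ne_zero).hasDerivAt (Ioi_mem_nhds hx))
      hp_meas hs.1 (hp_integrable.mono_set (Ioi_subset_Ioi hs.1.le))
      (integrableOn_Ioi_of_integrableOn_mul_norm (measurable_deriv p).aestronglyMeasurable
        (by simpa only [Real.norm_eq_abs] using hp') hs.1)
  have h_ind : (Ioi 0).indicator p = p := indicator_eq_self.2 fun x hx =>
    lt_of_not_ge fun h => hx (hp_zero x h)
  rw [(integrableOn_tailIntegral_and_integral_mul_min hμ hw_meas hw_int ht.le).2,
    setIntegral_congr_fun measurableSet_Ioc h_tail, measureReal_def]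
  conv_lhs => rw [← h_ind]
  rw [withDensity_indicator_Ioi_apply_Iic (hp_integrable.mono_set Ioc_subset_Ioi_self)
      fun x hx => (hp_pos x hx.1).le,
    ENNReal.toReal_ofReal (setIntegral_nonneg measurableSet_Ioc fun x hx => (hp_pos x hx.1).le)]

end Density

theorem positive_axis_cdf_characterization_general
    {Ω : Type*} [MeasurableSpace Ω] (ℙ : Measure Ω) [IsProbabilityMeasure ℙ]
    (X : Ω → ℝ) (hX : Measurable X) (hXpos : ∀ᵐ ω ∂ℙ, 0 < X ω)
    (p : ℝ → ℝ) (hp_pos : ∀ x > 0, 0 < p x)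
    (hp_smooth : ContDiffOn ℝ 1 p (Ioi 0))
    (hp_zero : ∀ x ≤ 0, p x = 0)
    (hp_int : ∫ x in Ioi (0 : ℝ), p x = 1)
    (hC3 : IntegrableOn (fun x => x * |deriv p x|) (Ioi 0))
    (hXint : Integrable (fun ω => deriv p (X ω) / p (X ω) * X ω) ℙ) :
    Measure.map X ℙ = volume.withDensity (fun x => ENNReal.ofReal (p x)) ↔
      ∀ t > 0, (ℙ {ω | X ω ≤ t}).toReal =
        ∫ ω, -(deriv p (X ω) / p (X ω)) * min (X ω) t ∂ℙ := by
  have : IsProbabilityMeasure (ℙ.map X) := Measure.isProbabilityMeasure_map hX.aemeasurable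
  have hp_meas := measurable_of_continuousOn_Ioi hp_smooth.continuousOn hp_zero
  have hw_meas : Measurable fun x => -(deriv p x / p x) := ((measurable_deriv p).div hp_meas).neg
  have hμ : ∀ᵐ x ∂ℙ.map X, 0 < x := (ae_map_iff hX.aemeasurable measurableSet_Ioi).2 hXpos
  have hw_int : Integrable (fun x => -(deriv p x / p x) * x) (ℙ.map X) := by
    rw [integrable_map_measure (show Measurable fun x => -(deriv p x / p x) * x from
      hw_meas.mul measurable_id).aestronglyMeasurable hX.aemeasurable]
    simpa only [Function.comp_def, neg_mul] using hXint.fun_neg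
  have h_cdf : ∀ t, (ℙ {ω | X ω ≤ t}).toReal = (ℙ.map X).real (Iic t) := fun t => by
    rw [measureReal_def, Measure.map_apply hX measurableSet_Iic]; rfl
  have h_rhs : ∀ t, ∫ ω, -(deriv p (X ω) / p (X ω)) * min (X ω) t ∂ℙ
      = ∫ x, -(deriv p x / p x) * min x t ∂ℙ.map X := fun t =>
    (integral_map hX.aemeasurable
      (hw_meas.mul (measurable_id.min measurable_const)).aestronglyMeasurable).symm
  simp only [h_cdf, h_rhs]
  exact eq_withDensity_iff_measureReal_Iic_eq_integral_mul_min hμ hp_pos hp_smooth hp_zero hp_int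
    hC3 hw_int

theorem positive_axis_cdf_characterization
    {Ω : Type*} [MeasurableSpace Ω] (ℙ : Measure Ω) [IsProbabilityMeasure ℙ]
    (X : Ω → ℝ) (hX : Measurable X) (hXpos : ∀ᵐ ω ∂ℙ, 0 < X ω)
    (p : ℝ → ℝ) (hp_pos : ∀ x > 0, 0 < p x)
    (hp_smooth : ContDiffOn ℝ 1 p (Ioi 0))
    (hp_zero : ∀ x ≤ 0, p x = 0)
    (hp_int : ∫ x in Ioi (0 : ℝ), p x = 1)
    (P : ℝ → ℝ) (hP : ∀ x, P x = ∫ s in Ioc (0 : ℝ) x, p s)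
    (hC3 : IntegrableOn (fun x => x * |deriv p x|) (Ioi 0))
    (hC4 : Tendsto (fun x => P x / p x) (nhdsWithin 0 (Ioi 0)) (nhds 0))
    (hC5 : Tendsto (fun x => (1 - P x) / p x) atTop (nhds 0))
    (hC2 : ∃ C : ℝ, ∀ x > 0, |deriv p x * min (P x) (1 - P x) / (p x) ^ 2| ≤ C)
    (hXint : Integrable (fun ω => deriv p (X ω) / p (X ω) * X ω) ℙ) :
    Measure.map X ℙ = volume.withDensity (fun x => ENNReal.ofReal (p x)) ↔
      ∀ t > 0, (ℙ {ω | X ω ≤ t}).toReal =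
        ∫ ω, -(deriv p (X ω) / p (X ω)) * min (X ω) t ∂ℙ :=
  positive_axis_cdf_characterization_general ℙ X hX hXpos p hp_pos hp_smooth hp_zero hp_int hC3
    hXint
end

section
/- Let λ > 0 and let X be a positive random variable with E[X] < ∞. Then X has the exponential distribution with rate λ if and only if F_X(t) = λ·E[min{X, t}] for all t > 0. -/
/-! Writing `F` for the cdf of `X`, the layer-cake formula gives `E[min X t] = ∫₀ᵗ (1 - F)`, so
the condition reads `F t = λ ∫₀ᵗ (1 - F)`. The exponential cdf satisfies it. Conversely, `F` is then
continuous on `[0, ∞)` with right derivative `λ (1 - F)`, so the integrating factor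
`exp (λ t) (1 - F t)` is constant, equal to its value `1` at `t = 0`. -/

open MeasureTheory Real Set

namespace ProbabilityTheory

lemma withDensity_ofReal_ite_pos_eq_expMeasure (l : ℝ) :
    volume.withDensity (fun x => ENNReal.ofReal (if 0 < x then l * exp (-(l * x)) else 0)) =
      expMeasure l := by
  refine withDensity_congr_ae ?_
  filter_upwards [compl_mem_ae_iff.2 (measure_singleton (0 : ℝ))] with x hx
  change _ = exponentialPDF l x
  simp only [exponentialPDF_eq, (Ne.symm hx).le_iff_lt]

lemma _root_.StieltjesFunction.eq_one_sub_exp_of_eq_mul_integral (F : StieltjesFunction ℝ)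
    {l : ℝ} (hF : ∀ t ≥ 0, F t = l * ∫ s in 0..t, (1 - F s)) {t : ℝ} (ht : 0 ≤ t) :
    F t = 1 - exp (-(l * t)) := by
  have hint : ∀ a b : ℝ, IntervalIntegrable (fun s => 1 - F s) volume a b := fun a b =>
    intervalIntegrable_const.sub F.mono.intervalIntegrable
  have hcont : ContinuousOn F (Ici 0) :=
    ((intervalIntegral.continuous_primitive hint 0).const_smul l).continuousOn.congr hF
  -- only right derivatives are available, since `F` is merely right-continuous a priori
  have hderiv : ∀ x ≥ 0, HasDerivWithinAt F (l * (1 - F x)) (Ici x) x := fun x hx =>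
    ((intervalIntegral.integral_hasDerivWithinAt_right (hint 0 x)
      (F.mono.measurable.const_sub 1).stronglyMeasurable.stronglyMeasurableAtFilter
      (((F.right_continuous x).mono Ioi_subset_Ici_self).const_sub 1)).const_mul l).congr_of_mem
      (fun y hy => hF y (hx.trans hy)) self_mem_Ici
  set φ : ℝ → ℝ := fun s => exp (l * s) * (1 - F s)
  have hφ : ∀ x ∈ Icc 0 t, φ x = φ 0 := by
    refine constant_of_has_deriv_right_zero ?_ fun x hx => ?_
    · exact (continuous_exp.comp (continuous_const_mul l)).continuousOn.mul
        (continuousOn_const.sub (hcont.mono Icc_subset_Ici_self))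
    · have hexp := ((hasDerivAt_id x).const_mul l).exp.hasDerivWithinAt (s := Ici x)
      refine (hexp.mul ((hderiv x hx.1).const_sub 1)).congr_deriv ?_
      simp only [id, mul_one]
      ring
  have hF0 : F 0 = 0 := by simpa using hF 0 le_rfl
  have hφt := hφ t ⟨ht, le_rfl⟩
  simp only [φ, hF0, mul_zero, exp_zero, sub_zero, mul_one] at hφt
  rw [exp_neg, ← eq_inv_of_mul_eq_one_right hφt]
  ring

variable {μ : Measure ℝ} [IsProbabilityMeasure μ]

lemma one_sub_cdf (x : ℝ) : 1 - cdf μ x = μ.real (Ioi x) := by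
  rw [cdf_eq_real, ← compl_Iic, probReal_compl_eq_one_sub measurableSet_Iic]

lemma cdf_eq_zero_of_ae_pos (hμ : ∀ᵐ x ∂μ, 0 < x) {t : ℝ} (ht : t ≤ 0) : cdf μ t = 0 := by
  rw [cdf_eq_real, measureReal_eq_zero_iff]
  rw [ae_iff] at hμ
  exact measure_mono_null (fun x hx => not_lt.2 (le_trans hx ht)) hμ

lemma integral_min_eq_intervalIntegral_one_sub_cdf (hμ : ∀ᵐ x ∂μ, 0 ≤ x) {t : ℝ} (ht : 0 ≤ t) :
    ∫ x, min x t ∂μ = ∫ s in 0..t, (1 - cdf μ s) := by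
  have hint : Integrable (fun x => min x t) μ :=
    (integrable_const t).mono' (by fun_prop) <| hμ.mono fun x hx => by
      rw [norm_eq_abs, abs_of_nonneg (le_min hx ht)]
      exact min_le_right x t
  have hlevel : ∀ s ∈ Ioo 0 t, μ.real {x | s < min x t} = 1 - cdf μ s := fun s hs => by
    simp only [lt_min_iff, hs.2, and_true, one_sub_cdf]
    rfl
  rw [hint.integral_eq_integral_meas_lt (hμ.mono fun x hx => le_min hx ht),
    setIntegral_eq_of_subset_of_forall_sdiff_eq_zero measurableSet_Ioi Ioo_subset_Ioi_self
      fun s hs => ?_, setIntegral_congr_fun measurableSet_Ioo hlevel,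
    intervalIntegral.integral_of_le ht, integral_Ioc_eq_integral_Ioo]
  have hts : t ≤ s := not_lt.1 fun h => hs.2 ⟨hs.1, h⟩
  simp [hts.not_gt]

lemma eq_expMeasure_iff_cdf_eq_mul_integral {l : ℝ} (hl : 0 < l) (hμ : ∀ᵐ x ∂μ, 0 < x) :
    μ = expMeasure l ↔ ∀ t > 0, cdf μ t = l * ∫ s in 0..t, (1 - cdf μ s) := by
  have := isProbabilityMeasure_expMeasure hl
  rw [← Measure.cdf_eq_iff]
  constructor
  · intro h t ht
    have hexp : ∀ s ∈ uIcc 0 t, 1 - cdf μ s = exp (-(l * s)) := fun s hs => by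
      rw [h, cdf_expMeasure_eq hl, if_pos (uIcc_of_le ht.le ▸ hs).1, sub_sub_cancel]
    rw [intervalIntegral.integral_congr hexp, ← intervalIntegral.integral_const_mul,
      intervalIntegral.integral_eq_sub_of_hasDerivAt (fun x _ => hasDerivAt_neg_exp_mul_exp)
        (Continuous.intervalIntegrable (by fun_prop) _ _), h, cdf_expMeasure_eq hl, if_pos ht.le]
    simp
    ring
  · intro h
    ext t
    rcases le_or_gt t 0 with ht | ht
    · rw [cdf_eq_zero_of_ae_pos hμ ht, cdf_expMeasure_eq hl]
      split_ifs with h0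
      · simp [le_antisymm ht h0]
      · rfl
    · rw [cdf_expMeasure_eq hl, if_pos ht.le]
      refine (cdf μ).eq_one_sub_exp_of_eq_mul_integral (fun s hs => ?_) ht.le
      rcases hs.eq_or_lt with rfl | hs
      · simp [cdf_eq_zero_of_ae_pos hμ le_rfl]
      · exact h s hs

end ProbabilityTheory

theorem exponential_mean_min_characterization_general
    {Ω : Type*} [MeasurableSpace Ω] (ℙ : Measure Ω) [IsProbabilityMeasure ℙ]
    (X : Ω → ℝ) (hX : Measurable X) (hXpos : ∀ᵐ ω ∂ℙ, 0 < X ω)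
    (l : ℝ) (hl : 0 < l) :
    Measure.map X ℙ = volume.withDensity
        (fun x => ENNReal.ofReal (if 0 < x then l * Real.exp (-(l * x)) else 0)) ↔
      ∀ t > 0, (ℙ {ω | X ω ≤ t}).toReal = l * ∫ ω, min (X ω) t ∂ℙ := by
  have := Measure.isProbabilityMeasure_map (μ := ℙ) hX.aemeasurable
  have hpos : ∀ᵐ x ∂ℙ.map X, 0 < x := (ae_map_iff hX.aemeasurable measurableSet_Ioi).2 hXpos
  rw [ProbabilityTheory.withDensity_ofReal_ite_pos_eq_expMeasure,
    ProbabilityTheory.eq_expMeasure_iff_cdf_eq_mul_integral hl hpos]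
  refine forall₂_congr fun t ht => ?_
  rw [← integral_map (f := fun x => min x t) hX.aemeasurable (by fun_prop),
    ProbabilityTheory.integral_min_eq_intervalIntegral_one_sub_cdf (hpos.mono fun _ => le_of_lt)
      ht.le, ProbabilityTheory.cdf_eq_real, map_measureReal_apply hX measurableSet_Iic]
  rfl

theorem exponential_mean_min_characterization
    {Ω : Type*} [MeasurableSpace Ω] (ℙ : Measure Ω) [IsProbabilityMeasure ℙ]
    (X : Ω → ℝ) (hX : Measurable X) (hXpos : ∀ᵐ ω ∂ℙ, 0 < X ω)
    (l : ℝ) (hl : 0 < l)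
    (hXint : Integrable X ℙ) :
    Measure.map X ℙ = volume.withDensity
        (fun x => ENNReal.ofReal (if 0 < x then l * Real.exp (-(l * x)) else 0)) ↔
      ∀ t > 0, (ℙ {ω | X ω ≤ t}).toReal = l * ∫ ω, min (X ω) t ∂ℙ :=
  exponential_mean_min_characterization_general ℙ X hX hXpos l hl
end

section
/- Let μ ∈ ℝ, σ > 0 and let X be a random variable with values in (μ, ∞) almost surely such that E[(X−μ)^{−1}] < ∞ and E[(X−μ)^{−2}] < ∞. Then X has the Lévy distribution with location μ and scale σ if and only if F_X(t) = (1/2)·E[(3/(X−μ) − σ/(X−μ)²)·(min{X, t} − μ)] for all t > μ. -/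
open MeasureTheory Real Filter Set Topology

/-!
Write `g(x) = (3/(x-μ) - σ/(x-μ)²)/2` and `H(s) = E[g(X); X > s]`. By Fubini,
`E[g(X) (min X t - μ)] = ∫_{(μ,t]} H`, so the identity says that on `(μ, ∞)` the law of `X`
has the (a priori signed) density `H`. Then `H(b) = H(a) - ∫_a^b g H`, i.e. `H' = -g H`.
The Lévy density `p` solves the same linear equation, so `H = K p`, and total mass one gives
`K = 1`. Conversely `p(s) = ∫_s^∞ g p` because `p' = -g p` and `p(∞) = 0`, and Fubini gives
the identity.
-/

theorem integral_mul_min_sub_eq_setIntegral_Ioc {ν : Measure ℝ} [IsFiniteMeasure ν]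
    {f : ℝ → ℝ} {μ t : ℝ} (hae : ∀ᵐ x ∂ν, μ < x) (hf : Integrable f ν) (ht : μ ≤ t) :
    ∫ x, f x * (min x t - μ) ∂ν = ∫ s in Ioc μ t, ∫ x in Ioi s, f x ∂ν := by
  set F : ℝ → ℝ → ℝ := fun x s => (Iio x).indicator (fun _ => f x) s
  have hF : Integrable (Function.uncurry F) (ν.prod (volume.restrict (Ioc μ t))) := by
    have hprod := (hf.mul_prod (integrable_const (μ := volume.restrict (Ioc μ t)) (1 : ℝ)))
      |>.indicator (measurableSet_lt measurable_snd measurable_fst)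
    refine hprod.congr (.of_forall fun ⟨x, s⟩ => ?_)
    by_cases hs : s < x <;> simp [F, hs]
  have hlength : ∀ x, μ < x → volume.real (Iio x ∩ Ioc μ t) = min x t - μ := fun x hx => by
    rw [measureReal_def, measure_congr
      ((Iio_ae_eq_Iic (μ := volume)).inter (ae_eq_refl (Ioc μ t))), inter_comm, Ioc_inter_Iic,
      Real.volume_Ioc, ENNReal.toReal_ofReal (by simp [ht, hx.le]), min_comm]
  calc ∫ x, f x * (min x t - μ) ∂ν = ∫ x, (∫ s in Ioc μ t, F x s) ∂ν := by
        refine integral_congr_ae ?_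
        filter_upwards [hae] with x hx
        rw [integral_indicator_const _ measurableSet_Iio, measureReal_restrict_apply
          measurableSet_Iio, hlength x hx, smul_eq_mul, mul_comm]
    _ = ∫ s in Ioc μ t, (∫ x, F x s ∂ν) := integral_integral_swap hF
    _ = ∫ s in Ioc μ t, ∫ x in Ioi s, f x ∂ν := by
        congr 1 with s
        rw [← integral_indicator measurableSet_Ioi]
        congr 1 with x

section SignedDensity

variable {ν : Measure ℝ} [IsFiniteMeasure ν] {h : ℝ → ℝ} {a b : ℝ}

theorem restrict_Ioc_add_withDensity_neg_eq_withDensity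
    (hhi : IntegrableOn h (Ioc a b))
    (hν : ∀ c ∈ Icc a b, ν.real (Ioc a c) = ∫ s in Ioc a c, h s) :
    ν.restrict (Ioc a b) + (volume.restrict (Ioc a b)).withDensity (fun s => .ofReal (-h s)) =
      (volume.restrict (Ioc a b)).withDensity (fun s => .ofReal (h s)) := by
  have := isFiniteMeasure_withDensity_ofReal hhi.neg.2
  refine Measure.ext_of_Iic _ _ fun u => ?_
  rw [Measure.add_apply, Measure.restrict_apply measurableSet_Iic,
    withDensity_apply _ measurableSet_Iic, withDensity_apply _ measurableSet_Iic,
    Measure.restrict_restrict measurableSet_Iic, inter_comm, Ioc_inter_Iic]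
  rcases lt_or_ge (min b u) a with hc | hc
  · simp [Ioc_eq_empty_of_le hc.le]
  have hJ : IntegrableOn h (Ioc a (min b u)) :=
    hhi.mono_set (Ioc_subset_Ioc_right (min_le_left _ _))
  have hpos := hJ.lintegral_lt_top.ne
  have hneg : ∫⁻ s in Ioc a (min b u), .ofReal (-h s) ≠ ⊤ := hJ.neg.lintegral_lt_top.ne
  rw [← ENNReal.toReal_eq_toReal_iff' (by finiteness) hpos, ENNReal.toReal_add
      (by finiteness) hneg, ← measureReal_def, hν _ ⟨hc, min_le_left _ _⟩,
    integral_eq_lintegral_pos_part_sub_lintegral_neg_part hJ]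
  ring

theorem setIntegral_Ioc_eq_setIntegral_mul_of_measureReal_Ioc (hhi : IntegrableOn h (Ioc a b))
    (hν : ∀ c ∈ Icc a b, ν.real (Ioc a c) = ∫ s in Ioc a c, h s) {f : ℝ → ℝ}
    (hf : AEStronglyMeasurable f (volume.restrict (Ioc a b))) (hfν : IntegrableOn f (Ioc a b) ν)
    (hhf : IntegrableOn (fun s => f s * h s) (Ioc a b)) :
    ∫ x in Ioc a b, f x ∂ν = ∫ s in Ioc a b, f s * h s := by
  have hpart : ∀ k : ℝ → ℝ, IntegrableOn k (Ioc a b) → (∀ s, |k s| ≤ |h s|) →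
      IntegrableOn (fun s => max (k s) 0 * f s) (Ioc a b) ∧
      Integrable f ((volume.restrict (Ioc a b)).withDensity fun s => .ofReal (k s)) ∧
      ∫ x, f x ∂(volume.restrict (Ioc a b)).withDensity (fun s => .ofReal (k s)) =
        ∫ s in Ioc a b, max (k s) 0 * f s := fun k hk hkh => by
    have hdens : AEMeasurable (fun s => ENNReal.ofReal (k s)) (volume.restrict (Ioc a b)) :=
      hk.aemeasurable.ennreal_ofReal
    have hfin : ∀ᵐ s ∂volume.restrict (Ioc a b), ENNReal.ofReal (k s) < ⊤ :=
      .of_forall fun _ => ENNReal.ofReal_lt_top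
    have hint : IntegrableOn (fun s => max (k s) 0 * f s) (Ioc a b) := by
      refine Integrable.mono hhf ((hk.1.sup aestronglyMeasurable_const).mul hf)
        (.of_forall fun s => ?_)
      simp only [norm_mul, norm_eq_abs]
      rw [mul_comm |f s|]
      refine mul_le_mul_of_nonneg_right ?_ (abs_nonneg _)
      rw [abs_of_nonneg (le_max_right _ _)]
      exact max_le ((le_abs_self _).trans (hkh s)) (abs_nonneg _)
    simp only [integrable_withDensity_iff_integrable_smul₀' hdens hfin,
      integral_withDensity_eq_integral_toReal_smul₀ hdens hfin, ENNReal.toReal_ofReal',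
      smul_eq_mul, and_true]
    exact ⟨hint, hint⟩
  obtain ⟨hint_pos, -, hpos⟩ := hpart h hhi fun s => le_rfl
  obtain ⟨hint_neg, hνneg, hneg⟩ := hpart (fun s => -h s) hhi.neg fun s => (abs_neg _).le
  have hsum := integral_add_measure hfν hνneg
  rw [restrict_Ioc_add_withDensity_neg_eq_withDensity hhi hν, hpos, hneg] at hsum
  rw [eq_sub_of_add_eq hsum.symm, ← integral_sub hint_pos hint_neg]
  congr 1 with s
  rw [← sub_mul, max_zero_sub_max_neg_zero_eq_self, mul_comm]

end SignedDensity

theorem hasDerivAt_of_eq_sub_integral {u k : ℝ → ℝ} {a : ℝ} (hk : ContinuousOn k (Ioi a))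
    (hint : ∀ y > a, IntervalIntegrable (fun t => k t * u t) volume a y)
    (hu : ∀ y > a, u y = u a - ∫ t in a..y, k t * u t) {x : ℝ} (hx : a < x) :
    HasDerivAt u (-(k x * u x)) x := by
  have hu_near : ∀ x > a, u =ᶠ[𝓝 x] fun y => u a - ∫ t in a..y, k t * u t := fun x hx =>
    eventually_of_mem (Ioi_mem_nhds hx) hu
  have hcont : ContinuousOn u (Ioi a) := fun x hx => by
    have hprim := intervalIntegral.continuousOn_primitive_interval' (hint (x + 1) (by
      linarith [mem_Ioi.1 hx])) left_mem_uIcc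
    rw [uIcc_of_le (by linarith [mem_Ioi.1 hx])] at hprim
    exact ((continuousAt_const.sub (hprim.continuousAt (Icc_mem_nhds hx (lt_add_one x)))).congr
      (hu_near x hx).symm).continuousWithinAt
  have hku : ContinuousOn (fun t => k t * u t) (Ioi a) := hk.mul hcont
  exact ((intervalIntegral.integral_hasDerivAt_right (hint x hx)
    (hku.stronglyMeasurableAtFilter isOpen_Ioi x hx)
    (hku.continuousAt (Ioi_mem_nhds hx))).const_sub (u a)).congr_of_eventuallyEq (hu_near x hx)

theorem exists_eq_const_mul_of_hasDerivAt_s15 {u v k : ℝ → ℝ} {s : Set ℝ} (hs : IsOpen s)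
    (hs' : IsPreconnected s) (hu : ∀ x ∈ s, HasDerivAt u (k x * u x) x)
    (hv : ∀ x ∈ s, HasDerivAt v (k x * v x) x) (hv0 : ∀ x ∈ s, v x ≠ 0) :
    ∃ K, ∀ x ∈ s, u x = K * v x := by
  have hquot : ∀ x ∈ s, HasDerivAt (fun y => u y / v y) 0 x := fun x hx =>
    ((hu x hx).div (hv x hx) (hv0 x hx)).congr_deriv (by ring)
  obtain ⟨K, hK⟩ := hs.exists_is_const_of_deriv_eq_zero hs'
    (fun x hx => (hquot x hx).differentiableAt.differentiableWithinAt)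
    (fun x hx => (hquot x hx).deriv)
  exact ⟨K, fun x hx => by rw [← hK x hx, div_mul_cancel₀ _ (hv0 x hx)]⟩

section Tail

variable {ν : Measure ℝ} {f : ℝ → ℝ} {μ : ℝ}

theorem aestronglyMeasurable_setIntegral_Ioi [SFinite ν] (hf : Integrable f ν) :
    AEStronglyMeasurable (fun s => ∫ x in Ioi s, f x ∂ν) volume := by
  have hprod : AEStronglyMeasurable
      (fun p : ℝ × ℝ => {p | p.1 < p.2}.indicator (fun p => f p.2) p) (volume.prod ν) :=
    (hf.1.comp_snd).indicator (measurableSet_lt measurable_fst measurable_snd)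
  refine hprod.integral_prod_right'.congr (.of_forall fun s => ?_)
  simp only [← integral_indicator measurableSet_Ioi]
  rfl

theorem norm_setIntegral_Ioi_le (hf : Integrable f ν) (s : ℝ) :
    ‖∫ x in Ioi s, f x ∂ν‖ ≤ ∫ x, ‖f x‖ ∂ν :=
  (norm_integral_le_integral_norm _).trans
    (setIntegral_le_integral hf.norm (.of_forall fun _ => norm_nonneg _))

theorem integrableOn_setIntegral_Ioi [SFinite ν] (hf : Integrable f ν) {a b : ℝ} :
    IntegrableOn (fun s => ∫ x in Ioi s, f x ∂ν) (Ioc a b) :=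
  Measure.integrableOn_of_bounded measure_Ioc_lt_top.ne
    (aestronglyMeasurable_setIntegral_Ioi hf) (.of_forall (norm_setIntegral_Ioi_le hf))

theorem integrableOn_mul_setIntegral_Ioi [SFinite ν] (hf : Integrable f ν)
    (hfc : ContinuousOn f (Ioi μ)) {a b : ℝ} (ha : μ < a) :
    IntegrableOn (fun t => f t * ∫ x in Ioi t, f x ∂ν) (Ioc a b) := by
  have hfab : IntegrableOn f (Ioc a b) :=
    ((hfc.mono fun x hx => ha.trans_le hx.1).integrableOn_compact isCompact_Icc).mono_set
      Ioc_subset_Icc_self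
  exact (hfab.bdd_mul (aestronglyMeasurable_setIntegral_Ioi hf).restrict
    (.of_forall (norm_setIntegral_Ioi_le hf))).congr (.of_forall fun t => mul_comm _ _)

variable [IsFiniteMeasure ν]

theorem measureReal_Iic_eq_setIntegral_Ioc (hae : ∀ᵐ x ∂ν, μ < x) (hf : Integrable f ν)
    (hcdf : ∀ t > μ, ν.real (Iic t) = ∫ x, f x * (min x t - μ) ∂ν) (t : ℝ) :
    ν.real (Iic t) = ∫ s in Ioc μ t, ∫ x in Ioi s, f x ∂ν := by
  rcases le_or_gt t μ with ht | ht
  · rw [Ioc_eq_empty ht.not_gt, Measure.restrict_empty, integral_zero_measure, measureReal_def,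
      measure_mono_null (s := Iic t) (t := {x | ¬μ < x})
      (fun x hx => not_lt.2 (ht.trans' hx)) (ae_iff.1 hae), ENNReal.toReal_zero]
  · rw [hcdf t ht, integral_mul_min_sub_eq_setIntegral_Ioc hae hf ht.le]

theorem measureReal_Ioc_eq_setIntegral_Ioc (hae : ∀ᵐ x ∂ν, μ < x) (hf : Integrable f ν)
    (hcdf : ∀ t > μ, ν.real (Iic t) = ∫ x, f x * (min x t - μ) ∂ν) {a c : ℝ} (ha : μ ≤ a)
    (hac : a ≤ c) : ν.real (Ioc a c) = ∫ s in Ioc a c, ∫ x in Ioi s, f x ∂ν := by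
  have hdiff := measureReal_sdiff (μ := ν) (Iic_subset_Iic.2 hac) measurableSet_Iic
  rw [Iic_sdiff_Iic] at hdiff
  rw [hdiff, measureReal_Iic_eq_setIntegral_Ioc hae hf hcdf,
    measureReal_Iic_eq_setIntegral_Ioc hae hf hcdf, ← Ioc_union_Ioc_eq_Ioc ha hac,
    setIntegral_union (Ioc_disjoint_Ioc_of_le le_rfl) measurableSet_Ioc (integrableOn_setIntegral_Ioi hf) (integrableOn_setIntegral_Ioi hf)]
  ring

theorem setIntegral_Ioi_eq_sub_integral (hae : ∀ᵐ x ∂ν, μ < x) (hf : Integrable f ν)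
    (hcdf : ∀ t > μ, ν.real (Iic t) = ∫ x, f x * (min x t - μ) ∂ν)
    (hfc : ContinuousOn f (Ioi μ)) {a b : ℝ} (ha : μ < a) (hab : a ≤ b) :
    ∫ x in Ioi b, f x ∂ν =
      (∫ x in Ioi a, f x ∂ν) - ∫ t in a..b, f t * ∫ x in Ioi t, f x ∂ν := by
  have hsplit :
      ∫ x in Ioi a, f x ∂ν = (∫ x in Ioc a b, f x ∂ν) + ∫ x in Ioi b, f x ∂ν := by
    rw [← Ioc_union_Ioi_eq_Ioi hab, setIntegral_union (Ioc_disjoint_Ioi le_rfl) measurableSet_Ioi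
      hf.integrableOn hf.integrableOn]
  rw [hsplit, setIntegral_Ioc_eq_setIntegral_mul_of_measureReal_Ioc
    (integrableOn_setIntegral_Ioi hf)
    (fun c hc => measureReal_Ioc_eq_setIntegral_Ioc hae hf hcdf ha.le hc.1)
    ((hfc.mono fun x hx => ha.trans hx.1).aestronglyMeasurable measurableSet_Ioc)
    hf.integrableOn (integrableOn_mul_setIntegral_Ioi hf hfc ha),
    intervalIntegral.integral_of_le hab]
  ring

theorem hasDerivAt_setIntegral_Ioi (hae : ∀ᵐ x ∂ν, μ < x) (hf : Integrable f ν)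
    (hcdf : ∀ t > μ, ν.real (Iic t) = ∫ x, f x * (min x t - μ) ∂ν)
    (hfc : ContinuousOn f (Ioi μ)) {x : ℝ} (hx : μ < x) :
    HasDerivAt (fun s => ∫ y in Ioi s, f y ∂ν) (-(f x * ∫ y in Ioi x, f y ∂ν)) x := by
  have ha : μ < (μ + x) / 2 := by linarith
  exact hasDerivAt_of_eq_sub_integral (hfc.mono (Ioi_subset_Ioi ha.le))
    (fun y hy => (intervalIntegrable_iff_integrableOn_Ioc_of_le (le_of_lt hy)).2
      (integrableOn_mul_setIntegral_Ioi hf hfc ha))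
    (fun y hy => setIntegral_Ioi_eq_sub_integral hae hf hcdf hfc ha (le_of_lt hy)) (by linarith)

end Tail

noncomputable def levyPdf (μ σ x : ℝ) : ℝ :=
  if μ < x then √(σ / (2 * π)) * (x - μ) ^ (-(3 : ℝ) / 2) * exp (-(σ / (2 * (x - μ)))) else 0

/-- The logarithmic derivative of `levyPdf μ σ` on `(μ, ∞)` is `-levyRate μ σ`. -/
noncomputable def levyRate (μ σ x : ℝ) : ℝ := (3 / (x - μ) - σ / (x - μ) ^ 2) / 2

noncomputable def levyMeasure (μ σ : ℝ) : Measure ℝ :=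
  volume.withDensity fun x => ENNReal.ofReal (levyPdf μ σ x)

section Levy

variable {μ σ x : ℝ}

theorem levyPdf_of_le (hx : x ≤ μ) : levyPdf μ σ x = 0 := if_neg hx.not_gt

theorem levyPdf_of_lt (hx : μ < x) :
    levyPdf μ σ x = √(σ / (2 * π)) * (x - μ) ^ (-(3 : ℝ) / 2) * exp (-(σ / (2 * (x - μ)))) :=
  if_pos hx

theorem levyPdf_nonneg (μ σ x : ℝ) : 0 ≤ levyPdf μ σ x := by
  unfold levyPdf
  split_ifs with hx
  · have : 0 < x - μ := sub_pos.2 hx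
    positivity
  · rfl

theorem levyPdf_pos (hσ : 0 < σ) (hx : μ < x) : 0 < levyPdf μ σ x := by
  have : 0 < x - μ := sub_pos.2 hx
  rw [levyPdf_of_lt hx]
  positivity

theorem measurable_levyPdf (μ σ : ℝ) : Measurable (levyPdf μ σ) :=
  Measurable.ite measurableSet_Ioi (by fun_prop) measurable_const

theorem measurable_levyRate (μ σ : ℝ) : Measurable (levyRate μ σ) := by
  unfold levyRate; fun_prop

theorem continuousOn_levyRate (μ σ : ℝ) : ContinuousOn (levyRate μ σ) (Ioi μ) := by
  have h : ∀ x ∈ Ioi μ, x - μ ≠ 0 := fun x hx => (sub_pos.2 hx).ne'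
  unfold levyRate
  exact (((continuousOn_const.div (by fun_prop) h).sub
    (continuousOn_const.div (by fun_prop) fun x hx => pow_ne_zero 2 (h x hx))).div_const 2)

theorem abs_levyRate_le (hσ : 0 ≤ σ) {a : ℝ} (ha : μ < a) (hx : a ≤ x) :
    |levyRate μ σ x| ≤ (3 / (a - μ) + σ / (a - μ) ^ 2) / 2 := by
  have ha' : 0 < a - μ := sub_pos.2 ha
  have hax : a - μ ≤ x - μ := by linarith
  have hx' : 0 < x - μ := by linarith
  rw [levyRate, abs_div, abs_two]
  gcongr
  refine (abs_sub _ _).trans ?_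
  rw [abs_of_nonneg (by positivity), abs_of_nonneg (by positivity)]
  gcongr

theorem hasDerivAt_levyPdf (hx : μ < x) :
    HasDerivAt (levyPdf μ σ) (-levyRate μ σ x * levyPdf μ σ x) x := by
  have hy : 0 < x - μ := sub_pos.2 hx
  have hpow : HasDerivAt (fun z => (z - μ) ^ (-(3 : ℝ) / 2))
      (1 * (-(3 : ℝ) / 2) * (x - μ) ^ (-(3 : ℝ) / 2 - 1)) x :=
    ((hasDerivAt_id x).sub_const μ).rpow_const (Or.inl hy.ne')
  have hexp : HasDerivAt (fun z => exp (-(σ / (2 * (z - μ)))))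
      (exp (-(σ / (2 * (x - μ)))) *
        -((0 * (2 * (x - μ)) - σ * (2 * 1)) / (2 * (x - μ)) ^ 2)) x :=
    ((hasDerivAt_const x σ).div (((hasDerivAt_id x).sub_const μ).const_mul 2)
      (by positivity)).neg.exp
  have hclosed := (hpow.const_mul (√(σ / (2 * π)))).mul hexp
  refine (hclosed.congr_of_eventuallyEq ?_).congr_deriv ?_
  · filter_upwards [Ioi_mem_nhds hx] with z hz using levyPdf_of_lt hz
  · rw [levyPdf_of_lt hx, levyRate, rpow_sub hy, rpow_one]
    field_simp
    ring

theorem tendsto_levyPdf_atTop : Tendsto (levyPdf μ σ) atTop (𝓝 0) := by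
  have hshift : Tendsto (fun x : ℝ => x - μ) atTop atTop :=
    tendsto_atTop_add_const_right _ _ tendsto_id
  have hpow : Tendsto (fun x : ℝ => (x - μ) ^ (-(3 : ℝ) / 2)) atTop (𝓝 0) := by
    simpa [neg_div, Function.comp_def] using
      (tendsto_rpow_neg_atTop (by norm_num : (0 : ℝ) < 3 / 2)).comp hshift
  have hexp : Tendsto (fun x : ℝ => exp (-(σ / (2 * (x - μ))))) atTop (𝓝 1) := by
    have h : Tendsto (fun x : ℝ => -(σ / (2 * (x - μ)))) atTop (𝓝 0) := by
      simpa using ((tendsto_const_nhds (x := σ)).div_atTop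
        (hshift.const_mul_atTop two_pos)).neg
    simpa [Function.comp_def] using (continuous_exp.tendsto 0).comp h
  have hclosed := ((tendsto_const_nhds (x := √(σ / (2 * π)))).mul hpow).mul hexp
  rw [mul_zero, zero_mul] at hclosed
  refine hclosed.congr' ?_
  filter_upwards [eventually_gt_atTop μ] with x hx using (levyPdf_of_lt hx).symm

theorem abs_deriv_mul_levyPdf_inv (hσ : 0 < σ) {u : ℝ} (hu : 0 < u) :
    |σ / 2 * -(u ^ 2)⁻¹| * levyPdf μ σ (μ + σ / 2 * u⁻¹) =
      √(σ / (2 * π)) * (σ / 2) ^ (-(1 : ℝ) / 2) * (exp (-u) * u ^ ((1 : ℝ) / 2 - 1)) := by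
  have hσ2 : 0 < σ / 2 := by positivity
  rw [levyPdf_of_lt (by simp; positivity), add_sub_cancel_left,
    show σ / (2 * (σ / 2 * u⁻¹)) = u by field_simp, mul_rpow hσ2.le (by positivity),
    inv_rpow hu.le, ← rpow_neg hu.le, abs_mul, abs_neg, abs_of_pos hσ2,
    abs_of_pos (by positivity)]
  have hσpow : (σ / 2) ^ (-(1 : ℝ) / 2) = σ / 2 * (σ / 2) ^ (-(3 : ℝ) / 2) := by
    rw [← rpow_one_add' hσ2.le (by norm_num)]; norm_num
  have hupow : u ^ ((1 : ℝ) / 2 - 1) = u ^ (-(-(3 : ℝ) / 2)) * (u ^ 2)⁻¹ := by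
    rw [← rpow_natCast, ← rpow_neg hu.le, ← rpow_add hu]; norm_num
  rw [hσpow, hupow]
  field_simp

theorem integral_levyPdf (hσ : 0 < σ) : ∫ x in Ioi μ, levyPdf μ σ x = 1 := by
  have himage : (fun u => μ + σ / 2 * u⁻¹) '' Ioi 0 = Ioi μ := by
    ext x
    refine ⟨?_, fun hx => ⟨σ / 2 * (x - μ)⁻¹, ?_, ?_⟩⟩
    · rintro ⟨u, hu, rfl⟩
      have : (0 : ℝ) < u := hu
      simp only [mem_Ioi, lt_add_iff_pos_right]; positivity
    · have : 0 < x - μ := sub_pos.2 hx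
      simp only [mem_Ioi]; positivity
    · have : x - μ ≠ 0 := (sub_pos.2 hx).ne'
      field_simp; ring
  have hderiv : ∀ u ∈ Ioi (0 : ℝ), HasDerivWithinAt (fun u => μ + σ / 2 * u⁻¹)
      (σ / 2 * -(u ^ 2)⁻¹) (Ioi 0) u := fun u hu =>
    (((hasDerivAt_inv (ne_of_gt hu)).const_mul (σ / 2)).const_add μ).hasDerivWithinAt
  have hinj : InjOn (fun u => μ + σ / 2 * u⁻¹) (Ioi 0) := fun u _ v _ huv => by
    simpa [hσ.ne'] using huv
  rw [← himage, integral_image_eq_integral_abs_deriv_smul measurableSet_Ioi hderiv hinj]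
  simp only [smul_eq_mul]
  rw [setIntegral_congr_fun measurableSet_Ioi fun u hu => abs_deriv_mul_levyPdf_inv hσ hu,
    integral_const_mul, ← Gamma_eq_integral (by norm_num), Gamma_one_half_eq,
    show -(1 : ℝ) / 2 = -(1 / 2) by ring, rpow_neg (by positivity), ← sqrt_eq_rpow,
    sqrt_div' _ two_pos.le, sqrt_div' _ (by positivity), sqrt_mul' _ pi_pos.le]
  have : 0 < √σ := sqrt_pos.2 hσ
  have : 0 < √π := sqrt_pos.2 pi_pos
  have : 0 < √2 := by positivity
  field_simp

theorem integrableOn_levyPdf (hσ : 0 < σ) : IntegrableOn (levyPdf μ σ) (Ioi μ) :=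
  .of_integral_ne_zero (by rw [integral_levyPdf hσ]; exact one_ne_zero)

theorem integral_Ioi_levyRate_mul_levyPdf (hσ : 0 < σ) {s : ℝ} (hs : μ < s) :
    ∫ x in Ioi s, levyRate μ σ x * levyPdf μ σ x = levyPdf μ σ s := by
  have hint : IntegrableOn (fun x => -levyRate μ σ x * levyPdf μ σ x) (Ioi s) := by
    refine ((integrableOn_levyPdf hσ).mono_set (Ioi_subset_Ioi hs.le)).bdd_mul
      (c := (3 / (s - μ) + σ / (s - μ) ^ 2) / 2)
      (measurable_levyRate μ σ).neg.aestronglyMeasurable ?_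
    filter_upwards [ae_restrict_mem measurableSet_Ioi] with x hx
    rw [norm_neg, norm_eq_abs]
    exact abs_levyRate_le hσ.le hs (le_of_lt hx)
  have hftc := integral_Ioi_of_hasDerivAt_of_tendsto
    (hasDerivAt_levyPdf hs).continuousAt.continuousWithinAt
    (fun x hx => hasDerivAt_levyPdf (hs.trans hx)) hint tendsto_levyPdf_atTop
  simpa only [neg_mul, integral_neg, zero_sub, neg_inj] using hftc

theorem levyMeasure_apply (hσ : 0 < σ) {s : Set ℝ} (hs : MeasurableSet s) :
    levyMeasure μ σ s = ENNReal.ofReal (∫ x in s ∩ Ioi μ, levyPdf μ σ x) := by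
  have hsupp : (fun x => ENNReal.ofReal (levyPdf μ σ x)).support ⊆ Ioi μ :=
    Function.support_subset_iff'.2 fun x hx => by simp [levyPdf_of_le (not_lt.1 hx)]
  rw [levyMeasure, withDensity_apply _ hs, ← setLIntegral_eq_of_support_subset hsupp,
    Measure.restrict_restrict measurableSet_Ioi, inter_comm,
    ← ofReal_integral_eq_lintegral_ofReal ((integrableOn_levyPdf hσ).mono_set inter_subset_right)
      (.of_forall (levyPdf_nonneg μ σ))]

theorem levyMeasure_Iic (hσ : 0 < σ) (t : ℝ) :
    levyMeasure μ σ (Iic t) = ENNReal.ofReal (∫ x in Ioc μ t, levyPdf μ σ x) := by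
  rw [levyMeasure_apply hσ measurableSet_Iic, inter_comm, Ioi_inter_Iic]

theorem isProbabilityMeasure_levyMeasure (hσ : 0 < σ) :
    IsProbabilityMeasure (levyMeasure μ σ) :=
  ⟨by rw [levyMeasure_apply hσ MeasurableSet.univ, univ_inter, integral_levyPdf hσ,
    ENNReal.ofReal_one]⟩

theorem ae_lt_levyMeasure : ∀ᵐ x ∂levyMeasure μ σ, μ < x := by
  refine (ae_withDensity_iff (measurable_levyPdf μ σ).ennreal_ofReal).2
    (.of_forall fun x hx => ?_)
  by_contra h
  exact hx (by rw [levyPdf_of_le (not_lt.1 h), ENNReal.ofReal_zero])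

theorem setIntegral_levyMeasure {s : Set ℝ} (hs : MeasurableSet s) (f : ℝ → ℝ) :
    ∫ x in s, f x ∂levyMeasure μ σ = ∫ x in s, f x * levyPdf μ σ x := by
  rw [levyMeasure, restrict_withDensity hs, integral_withDensity_eq_integral_toReal_smul
    (measurable_levyPdf μ σ).ennreal_ofReal (.of_forall fun _ => ENNReal.ofReal_lt_top)]
  simp only [ENNReal.toReal_ofReal (levyPdf_nonneg μ σ _), smul_eq_mul, mul_comm]

theorem measureReal_levyMeasure_Iic_eq_integral (hσ : 0 < σ)
    (hg : Integrable (levyRate μ σ) (levyMeasure μ σ)) {t : ℝ} (ht : μ < t) :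
    (levyMeasure μ σ).real (Iic t) = ∫ x, levyRate μ σ x * (min x t - μ) ∂levyMeasure μ σ := by
  have := isProbabilityMeasure_levyMeasure (μ := μ) hσ
  rw [integral_mul_min_sub_eq_setIntegral_Ioc ae_lt_levyMeasure hg ht.le, measureReal_def,
    levyMeasure_Iic hσ, ENNReal.toReal_ofReal (setIntegral_nonneg measurableSet_Ioc
      fun x _ => levyPdf_nonneg μ σ x)]
  refine setIntegral_congr_fun measurableSet_Ioc fun s hs => ?_
  rw [setIntegral_levyMeasure measurableSet_Ioi, integral_Ioi_levyRate_mul_levyPdf hσ hs.1]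

theorem eq_levyMeasure_of_measureReal_Iic_eq (hσ : 0 < σ) {ν : Measure ℝ}
    [IsProbabilityMeasure ν] (hae : ∀ᵐ x ∂ν, μ < x) (hg : Integrable (levyRate μ σ) ν)
    (hcdf : ∀ t > μ, ν.real (Iic t) = ∫ x, levyRate μ σ x * (min x t - μ) ∂ν) :
    ν = levyMeasure μ σ := by
  have := isProbabilityMeasure_levyMeasure (μ := μ) hσ
  obtain ⟨K, hK⟩ := exists_eq_const_mul_of_hasDerivAt_s15 isOpen_Ioi isPreconnected_Ioi
    (fun x hx => (hasDerivAt_setIntegral_Ioi hae hg hcdf (continuousOn_levyRate μ σ)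
      hx).congr_deriv (neg_mul _ _).symm)
    (fun x hx => hasDerivAt_levyPdf hx) (fun x hx => (levyPdf_pos hσ hx).ne')
  have hIic : ∀ t, ν (Iic t) = ENNReal.ofReal K * levyMeasure μ σ (Iic t) := fun t => by
    rw [← ENNReal.ofReal_toReal (measure_ne_top ν _), ← measureReal_def,
      measureReal_Iic_eq_setIntegral_Ioc hae hg hcdf, levyMeasure_Iic hσ,
      setIntegral_congr_fun measurableSet_Ioc fun s hs => hK s hs.1, integral_const_mul,
      ENNReal.ofReal_mul' (setIntegral_nonneg measurableSet_Ioc fun x _ => levyPdf_nonneg μ σ x)]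
  have hν : ν = ENNReal.ofReal K • levyMeasure μ σ := Measure.ext_of_Iic _ _ hIic
  have hK1 : ENNReal.ofReal K = 1 := by simpa using (congrArg (· univ) hν).symm
  rw [hν, hK1, one_smul]

end Levy

theorem levy_fixed_point_characterization
    {Ω : Type*} [MeasurableSpace Ω] (ℙ : Measure Ω) [IsProbabilityMeasure ℙ]
    (X : Ω → ℝ) (hX : Measurable X)
    (μ σ : ℝ) (hσ : 0 < σ)
    (hXgt : ∀ᵐ ω ∂ℙ, μ < X ω)
    (hint1 : Integrable (fun ω => (X ω - μ)⁻¹) ℙ)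
    (hint2 : Integrable (fun ω => ((X ω - μ) ^ 2)⁻¹) ℙ) :
    Measure.map X ℙ = volume.withDensity
        (fun x => ENNReal.ofReal
          (if μ < x then
            Real.sqrt (σ / (2 * π)) * (x - μ) ^ (-(3 : ℝ) / 2) *
              Real.exp (-(σ / (2 * (x - μ)))) else 0)) ↔
      ∀ t > μ, (ℙ {ω | X ω ≤ t}).toReal =
        (1 / 2) * ∫ ω, (3 / (X ω - μ) - σ / (X ω - μ) ^ 2) * (min (X ω) t - μ) ∂ℙ := by
  have := Measure.isProbabilityMeasure_map (μ := ℙ) hX.aemeasurable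
  have hg : Integrable (levyRate μ σ) (ℙ.map X) := by
    rw [integrable_map_measure (measurable_levyRate μ σ).aestronglyMeasurable hX.aemeasurable]
    exact ((hint1.const_mul 3).sub (hint2.const_mul σ)).div_const 2 |>.congr
      (.of_forall fun ω => by simp [levyRate, div_eq_mul_inv])
  have hcdf : ∀ t, (ℙ {ω | X ω ≤ t}).toReal = (ℙ.map X).real (Iic t) := fun t => by
    rw [measureReal_def, Measure.map_apply hX measurableSet_Iic]; rfl
  have hmoment : ∀ t,
      (1 / 2) * ∫ ω, (3 / (X ω - μ) - σ / (X ω - μ) ^ 2) * (min (X ω) t - μ) ∂ℙ =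
        ∫ x, levyRate μ σ x * (min x t - μ) ∂ℙ.map X := fun t => by
    rw [integral_map hX.aemeasurable (by fun_prop), ← integral_const_mul]
    congr 1 with ω
    rw [levyRate]; ring
  simp only [hcdf, hmoment]
  refine ⟨fun h t ht => ?_, eq_levyMeasure_of_measureReal_Iic_eq hσ
    ((ae_map_iff hX.aemeasurable measurableSet_Ioi).2 hXgt) hg⟩
  change ℙ.map X = levyMeasure μ σ at h
  rw [h] at hg ⊢
  exact measureReal_levyMeasure_Iic_eq_integral hσ hg ht
end

section
/- Let p be a positive, continuously differentiable probability density on ℝ satisfying ∫(1+|x|)|p'(x)|dx < ∞, and let X be a random variable with density p. Then for Lebesgue-almost every t ∈ ℝ, p(t) = E[(p'(X)/p(X))·1{X ≤ t}]. -/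
/-!
Both `p` (a density of the law of `X`) and `p'` are integrable, so `p` tends to `0` at `-∞`
and the fundamental theorem of calculus gives `p t = ∫_{(-∞, t]} p'` for every `t`. Writing
the expectation against the law `p(x) dx` of `X`, the factor `p(X)` in the denominator cancels
and the right-hand side is the same integral.
-/

open MeasureTheory Real Set

section Density

variable {Ω α : Type*} [MeasurableSpace Ω] [MeasurableSpace α] {ℙ : Measure Ω} {X : Ω → α}
  {μ : Measure α} {p : α → ℝ}

theorem integrable_of_map_eq_withDensity_ofReal [IsFiniteMeasure ℙ] (hX : AEMeasurable X ℙ)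
    (hp_meas : AEStronglyMeasurable p μ) (hp_nonneg : 0 ≤ᵐ[μ] p)
    (hlaw : ℙ.map X = μ.withDensity fun x => ENNReal.ofReal (p x)) :
    Integrable p μ := by
  refine ⟨hp_meas, ?_⟩
  rw [hasFiniteIntegral_iff_ofReal hp_nonneg, ← setLIntegral_univ,
    ← withDensity_apply _ MeasurableSet.univ, ← hlaw, Measure.map_apply_of_aemeasurable hX
    MeasurableSet.univ]
  exact measure_lt_top _ _

theorem integral_comp_eq_integral_mul_of_map_eq_withDensity_ofReal {g : α → ℝ}
    (hX : AEMeasurable X ℙ) (hp_meas : AEMeasurable p μ) (hp_nonneg : 0 ≤ᵐ[μ] p)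
    (hg : AEStronglyMeasurable g μ)
    (hlaw : ℙ.map X = μ.withDensity fun x => ENNReal.ofReal (p x)) :
    ∫ ω, g (X ω) ∂ℙ = ∫ x, p x * g x ∂μ := by
  have hg_law : AEStronglyMeasurable g (ℙ.map X) :=
    hlaw ▸ hg.mono_ac (withDensity_absolutelyContinuous _ _)
  rw [← integral_map hX hg_law, hlaw, integral_withDensity_eq_integral_toReal_smul₀
    hp_meas.ennreal_ofReal (ae_of_all _ fun _ => ENNReal.ofReal_lt_top)]
  refine integral_congr_ae ?_
  filter_upwards [hp_nonneg] with x hx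
  rw [ENNReal.toReal_ofReal hx, smul_eq_mul]

end Density

theorem integral_Iic_of_hasDerivAt_of_integrableOn {E : Type*} [NormedAddCommGroup E]
    [NormedSpace ℝ E] [CompleteSpace E] {f f' : ℝ → E} {a : ℝ}
    (hderiv : ∀ x ∈ Iic a, HasDerivAt f (f' x) x) (hf' : IntegrableOn f' (Iic a))
    (hf : IntegrableOn f (Iic a)) :
    ∫ x in Iic a, f' x = f a := by
  rw [integral_Iic_of_hasDerivAt_of_tendsto' hderiv hf'
    (tendsto_zero_of_hasDerivAt_of_integrableOn_Iic hderiv hf' hf), sub_zero]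

theorem density_representation_real_line_general
    {Ω : Type*} [MeasurableSpace Ω] (ℙ : Measure Ω) [IsProbabilityMeasure ℙ]
    (X : Ω → ℝ) (hX : Measurable X)
    (p : ℝ → ℝ) (hp_pos : ∀ x, 0 < p x) (hp_smooth : ContDiff ℝ 1 p)
    (hC3 : Integrable (fun x => (1 + |x|) * |deriv p x|))
    (hlaw : Measure.map X ℙ = volume.withDensity fun x => ENNReal.ofReal (p x)) :
    ∀ᵐ t ∂(volume : Measure ℝ),
      p t = ∫ ω, deriv p (X ω) / p (X ω) *
        Set.indicator (Iic t) (fun _ => (1 : ℝ)) (X ω) ∂ℙ := by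
  have hp_cont : Continuous p := hp_smooth.continuous
  have hp'_cont : Continuous (deriv p) := hp_smooth.continuous_deriv le_rfl
  have hp_nonneg : 0 ≤ᵐ[volume] p := ae_of_all _ fun x => (hp_pos x).le
  have hderiv : ∀ x, HasDerivAt p (deriv p x) x :=
    fun x => (hp_smooth.differentiable one_ne_zero x).hasDerivAt
  have hp'_int : Integrable (deriv p) :=
    hC3.mono' hp'_cont.aestronglyMeasurable <| ae_of_all _ fun x => by
      rw [norm_eq_abs]
      exact le_mul_of_one_le_left (abs_nonneg _) (le_add_of_nonneg_right (abs_nonneg x))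
  have hp_int : Integrable p := integrable_of_map_eq_withDensity_ofReal hX.aemeasurable
    hp_cont.aestronglyMeasurable hp_nonneg hlaw
  refine ae_of_all _ fun t => ?_
  have hcancel : (fun x => p x * (deriv p x / p x * (Iic t).indicator (fun _ => (1 : ℝ)) x)) =
      (Iic t).indicator (deriv p) := by
    ext x
    by_cases hx : x ∈ Iic t
    · simp only [indicator_of_mem hx]
      field_simp [(hp_pos x).ne']
    · simp [indicator_of_notMem hx]
  have hg_meas : AEStronglyMeasurable
      (fun x => deriv p x / p x * (Iic t).indicator (fun _ => (1 : ℝ)) x) volume :=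
    (hp'_cont.div hp_cont fun x => (hp_pos x).ne').aestronglyMeasurable.mul
      (measurable_const.indicator measurableSet_Iic).aestronglyMeasurable
  rw [integral_comp_eq_integral_mul_of_map_eq_withDensity_ofReal hX.aemeasurable
      hp_cont.aemeasurable hp_nonneg hg_meas hlaw, hcancel, integral_indicator measurableSet_Iic,
    integral_Iic_of_hasDerivAt_of_integrableOn (fun x _ => hderiv x) hp'_int.integrableOn
      hp_int.integrableOn]

theorem density_representation_real_line
    {Ω : Type*} [MeasurableSpace Ω] (ℙ : Measure Ω) [IsProbabilityMeasure ℙ]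
    (X : Ω → ℝ) (hX : Measurable X)
    (p : ℝ → ℝ) (hp_pos : ∀ x, 0 < p x) (hp_smooth : ContDiff ℝ 1 p)
    (hp_int : ∫ x, p x = 1)
    (hC3 : Integrable (fun x => (1 + |x|) * |deriv p x|))
    (hlaw : Measure.map X ℙ = volume.withDensity fun x => ENNReal.ofReal (p x)) :
    ∀ᵐ t ∂(volume : Measure ℝ),
      p t = ∫ ω, deriv p (X ω) / p (X ω) *
        Set.indicator (Iic t) (fun _ => (1 : ℝ)) (X ω) ∂ℙ :=
  density_representation_real_line_general ℙ X hX p hp_pos hp_smooth hC3 hlaw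
end
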